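/- arXiv:1911.01722 — 9 statements merged into one kernel-verified Lean document; each statement's English description precedes it below -/
import Mathlib

section
/- Let k ≥ 1 be an integer, p ≡ 1 (mod 2k+2) a prime, and B a nonsingular perfect B[-k,k+2](p) splitter set. If i ∈ B, then the entire coset i·⟨-(k+1)/(k+2)⟩ (where ⟨-(k+1)/(k+2)⟩ is the multiplicative subgroup of Z_p* generated by -(k+1)/(k+2)) is contained in B. In particular, the multiplicative order of -(k+1)/(k+2) modulo p is odd. -/
/-- `b·[-k1,k2]* = {b·j mod q : -k1 ≤ j ≤ k2, j ≠ 0}` as a finset of `ZMod q`. -/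
noncomputable def bStar (k1 k2 q : ℕ) (b : ZMod q) : Finset (ZMod q) :=
  ((Finset.Icc (-(k1 : ℤ)) (k2 : ℤ)).erase 0).image (fun j : ℤ => b * (j : ZMod q))

/-- `B` is a `B[-k1,k2](q)` splitter set. -/
def IsSplitter (k1 k2 q : ℕ) (B : Finset (ZMod q)) : Prop :=
  (∀ b ∈ B, (bStar k1 k2 q b).card = k1 + k2) ∧
  ((B : Set (ZMod q)).Pairwise fun b b' => Disjoint (bStar k1 k2 q b) (bStar k1 k2 q b'))

/-- `B` is a perfect splitter set: `|B| = (q-1)/(k1+k2)` with exact division. -/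
def IsPerfectSplitter (k1 k2 q : ℕ) (B : Finset (ZMod q)) : Prop :=
  IsSplitter k1 k2 q B ∧ (k1 + k2) * B.card = q - 1

/-!
Perfectness makes the sets `b·[-k,k+2]*`, `b ∈ B`, partition `ℤ_p^*`. For `i ∈ B` write
`-(k+1)·i = b·j` with `b ∈ B` and `j ∈ [-k,k+2]*`. If `j ≤ k`, then `(k+1)·i = b·(-j)` forces
`b = i` and `p ∣ j+k+1`, impossible as `0 < j+k+1 < p`. If `j = k+1`, then `b = -i`, but
`i·1 = (-i)·(-1)` makes the sets of `i` and `-i` meet. Hence `j = k+2`, i.e. `b = i·g` with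
`g = -(k+1)/(k+2)`, and `B` is closed under multiplication by `g`. If `g` had even order, some power
of `g` would be `-1`, and again `-i ∈ B`.
-/

open Finset

lemma ZMod.intCast_ne_zero_of_natAbs_lt {p : ℕ} {j : ℤ} (h0 : j ≠ 0) (hj : j.natAbs < p) :
    (j : ZMod p) ≠ 0 := by
  rw [Ne, ZMod.intCast_zmod_eq_zero_iff_dvd]
  exact fun h => h0 (Int.eq_zero_of_dvd_of_natAbs_lt_natAbs h (by simpa using hj))

lemma exists_pow_eq_neg_one_of_even_orderOf {R : Type*} [Ring R] [Nontrivial R]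
    [NoZeroDivisors R] {p : ℕ} [CharP R p] (hp : p ≠ 2) {x : R} (hx : orderOf x ≠ 0)
    (h : Even (orderOf x)) : ∃ n, x ^ n = -1 :=
  ⟨orderOf x / 2, (CharP.orderOf_eq_two_iff p hp).1 (orderOf_pow_orderOf_div hx h.two_dvd)⟩

lemma mem_bStar {k1 k2 q : ℕ} {b x : ZMod q} :
    x ∈ bStar k1 k2 q b ↔ ∃ j : ℤ, (-(k1 : ℤ) ≤ j ∧ j ≤ k2 ∧ j ≠ 0) ∧ b * j = x := by
  simp only [bStar, mem_image, mem_erase, mem_Icc]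
  exact exists_congr fun j => and_congr_left' (by tauto)

lemma mul_intCast_mem_bStar {k1 k2 q : ℕ} (b : ZMod q) {j : ℤ}
    (hj : -(k1 : ℤ) ≤ j ∧ j ≤ k2 ∧ j ≠ 0) : b * (j : ZMod q) ∈ bStar k1 k2 q b :=
  mem_bStar.2 ⟨j, hj, rfl⟩

namespace IsSplitter

variable {k1 k2 q : ℕ} {B : Finset (ZMod q)}

theorem eq_of_mul_eq (hB : IsSplitter k1 k2 q B) {b b' : ZMod q} (hb : b ∈ B) (hb' : b' ∈ B)
    {j j' : ℤ} (hj : -(k1 : ℤ) ≤ j ∧ j ≤ k2 ∧ j ≠ 0) (hj' : -(k1 : ℤ) ≤ j' ∧ j' ≤ k2 ∧ j' ≠ 0)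
    (h : b * j = b' * j') : b = b' := by
  by_contra hne
  exact disjoint_left.mp (hB.2 hb hb' hne) (mul_intCast_mem_bStar b hj)
    (h ▸ mul_intCast_mem_bStar b' hj')

theorem ne_zero (hB : IsSplitter k1 k2 q B) (hk : 2 ≤ k1 + k2) {b : ZMod q} (hb : b ∈ B) :
    b ≠ 0 := by
  rintro rfl
  have hsub : bStar k1 k2 q 0 ⊆ {0} := fun x hx => by
    obtain ⟨j, -, rfl⟩ := mem_bStar.1 hx
    simp
  have := card_le_card hsub
  rw [hB.1 0 hb, card_singleton] at this
  omega

theorem neg_notMem {p : ℕ} [Fact p.Prime] {B : Finset (ZMod p)} (hB : IsSplitter k1 k2 p B)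
    (hk1 : 1 ≤ k1) (hk2 : 1 ≤ k2) (hp : 2 < p) {b : ZMod p} (hb : b ∈ B) : -b ∉ B := by
  intro hnb
  have hb_neg : b = -b := hB.eq_of_mul_eq hb hnb (j := 1) (j' := -1) (by omega) (by omega)
    (by push_cast; ring)
  have h2 : ((2 : ℤ) : ZMod p) ≠ 0 := ZMod.intCast_ne_zero_of_natAbs_lt two_ne_zero hp
  have h2b : ((2 : ℤ) : ZMod p) * b = 0 := by push_cast; linear_combination hb_neg
  exact hB.ne_zero (by omega) hb ((mul_eq_zero.1 h2b).resolve_left h2)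

end IsSplitter

namespace IsPerfectSplitter

variable {k1 k2 : ℕ}

section

variable {q : ℕ} {B : Finset (ZMod q)}

theorem nonempty (hB : IsPerfectSplitter k1 k2 q B) (hq : 1 < q) : B.Nonempty := by
  rw [← card_pos]
  by_contra h
  have := hB.2
  rw [Nat.eq_zero_of_not_pos h, mul_zero] at this
  omega

theorem add_lt (hB : IsPerfectSplitter k1 k2 q B) (hq : 1 < q) : k1 + k2 < q := by
  have := Nat.le_mul_of_pos_right (k1 + k2) (card_pos.2 (hB.nonempty hq))
  have := hB.2
  omega

end

section Prime

variable {k p : ℕ} [Fact p.Prime] {B : Finset (ZMod p)}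

theorem zero_notMem_bStar (hB : IsPerfectSplitter k1 k2 p B) (hk : 2 ≤ k1 + k2) {b : ZMod p}
    (hb : b ∈ B) : 0 ∉ bStar k1 k2 p b := by
  have hlt := hB.add_lt (Fact.out : p.Prime).one_lt
  intro h0
  obtain ⟨j, ⟨hj1, hj2, hj0⟩, hbj⟩ := mem_bStar.1 h0
  exact mul_ne_zero (hB.1.ne_zero hk hb) (ZMod.intCast_ne_zero_of_natAbs_lt hj0 (by omega)) hbj

theorem exists_mem_bStar (hB : IsPerfectSplitter k1 k2 p B) (hk : 2 ≤ k1 + k2) {x : ZMod p}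
    (hx : x ≠ 0) : ∃ b ∈ B, x ∈ bStar k1 k2 p b := by
  have hsub : B.biUnion (bStar k1 k2 p) ⊆ univ.erase 0 := fun y hy => by
    obtain ⟨b, hb, hyb⟩ := mem_biUnion.1 hy
    exact mem_erase.2 ⟨fun h => hB.zero_notMem_bStar hk hb (h ▸ hyb), mem_univ y⟩
  have hcard : (univ.erase (0 : ZMod p)).card ≤ (B.biUnion (bStar k1 k2 p)).card := by
    rw [card_biUnion fun b hb b' hb' hne => hB.1.2 hb hb' hne, sum_congr rfl hB.1.1,
      card_erase_of_mem (mem_univ _), card_univ, ZMod.card, sum_const, smul_eq_mul, mul_comm,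
      hB.2]
  exact mem_biUnion.1 ((eq_of_subset_of_card_le hsub hcard).symm ▸ mem_erase.2 ⟨hx, mem_univ x⟩)

theorem mul_mem (hB : IsPerfectSplitter k (k + 2) p B) (hk : 1 ≤ k) {i : ZMod p} (hi : i ∈ B) :
    i * -((k + 1 : ZMod p) * (k + 2 : ZMod p)⁻¹) ∈ B := by
  have hp : 2 * k + 2 < p := by have := hB.add_lt (Fact.out : p.Prime).one_lt; omega
  have hk1 : (k + 1 : ZMod p) ≠ 0 := by
    exact_mod_cast ZMod.intCast_ne_zero_of_natAbs_lt (j := k + 1) (by omega) (by omega)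
  have hk2 : (k + 2 : ZMod p) ≠ 0 := by
    exact_mod_cast ZMod.intCast_ne_zero_of_natAbs_lt (j := k + 2) (by omega) (by omega)
  have hi0 := hB.1.ne_zero (by omega) hi
  obtain ⟨b, hb, hxb⟩ :=
    hB.exists_mem_bStar (by omega) (neg_ne_zero.2 (mul_ne_zero hi0 hk1))
  obtain ⟨j, hj, hbj⟩ := mem_bStar.1 hxb
  rcases (by omega : j ≤ k ∨ j = k + 1 ∨ j = k + 2) with hjk | rfl | rfl
  · obtain rfl : i = b := hB.1.eq_of_mul_eq hi hb (j := k + 1) (j' := -j) (by omega) (by omega)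
      (by push_cast; linear_combination hbj)
    have h : i * ((j + k + 1 : ℤ) : ZMod p) = 0 := by push_cast; linear_combination hbj
    exact absurd ((mul_eq_zero.1 h).resolve_left hi0) (ZMod.intCast_ne_zero_of_natAbs_lt (by omega) (by omega))
  · have h : (b + i) * (k + 1 : ZMod p) = 0 := by push_cast at hbj; linear_combination hbj
    have hb_neg : b = -i := eq_neg_of_add_eq_zero_left ((mul_eq_zero.1 h).resolve_right hk1)
    exact absurd (hb_neg ▸ hb) (hB.1.neg_notMem hk (by omega) (by omega) hi)
  · convert hb using 1
    push_cast at hbj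
    field_simp
    linear_combination -hbj

theorem mul_pow_mem (hB : IsPerfectSplitter k (k + 2) p B) (hk : 1 ≤ k) {i : ZMod p}
    (hi : i ∈ B) (n : ℕ) : i * (-((k + 1 : ZMod p) * (k + 2 : ZMod p)⁻¹)) ^ n ∈ B := by
  induction n with
  | zero => simpa using hi
  | succ n ih => simpa only [pow_succ, mul_assoc] using hB.mul_mem hk ih

end Prime

end IsPerfectSplitter

theorem stmt_1_general (k p : ℕ) (hk : 1 ≤ k) (hp : p.Prime)
    (B : Finset (ZMod p)) (hB : IsPerfectSplitter k (k + 2) p B) :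
    (∀ i ∈ B, ∀ n : ℕ,
        i * (-((k + 1 : ZMod p) * (k + 2 : ZMod p)⁻¹)) ^ n ∈ B) ∧
      Odd (orderOf (-((k + 1 : ZMod p) * (k + 2 : ZMod p)⁻¹))) := by
  have : Fact p.Prime := ⟨hp⟩
  have hmem := fun i (hi : i ∈ B) n => hB.mul_pow_mem hk hi n
  refine ⟨hmem, ?_⟩
  set g := -((k + 1 : ZMod p) * (k + 2 : ZMod p)⁻¹)
  have hp_gt : 2 * k + 2 < p := by have := hB.add_lt hp.one_lt; omega
  obtain ⟨i, hi⟩ := hB.nonempty hp.one_lt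
  have hg : g ≠ 0 := right_ne_zero_of_mul (hB.1.ne_zero (by omega) (by simpa using hmem i hi 1))
  have hord : orderOf g ≠ 0 :=
    (Nat.pos_of_dvd_of_pos (ZMod.orderOf_dvd_card_sub_one hg) (by omega)).ne'
  by_contra hodd
  obtain ⟨n, hn⟩ :=
    exists_pow_eq_neg_one_of_even_orderOf (p := p) (by omega) hord (Nat.not_odd_iff_even.1 hodd)
  exact hB.1.neg_notMem hk (by omega) (by omega) hi (by simpa [hn] using hmem i hi n)

theorem stmt_1 (k p : ℕ) (hk : 1 ≤ k) (hp : p.Prime) (hmod : p % (2 * k + 2) = 1)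
    (B : Finset (ZMod p)) (hB : IsPerfectSplitter k (k + 2) p B)
    (hns : Nat.Coprime p (Nat.factorial (k + 2))) :
    (∀ i ∈ B, ∀ n : ℕ,
        i * (-((k + 1 : ZMod p) * (k + 2 : ZMod p)⁻¹)) ^ n ∈ B) ∧
      Odd (orderOf (-((k + 1 : ZMod p) * (k + 2 : ZMod p)⁻¹))) :=
  stmt_1_general k p hk hp B hB
end

section
/- Let k1, k2 be integers with 0 ≤ k1 ≤ k2 and p ≡ 1 (mod k1+k2) a prime with p > k1+k2. Then there exists a nonsingular perfect B[-k1,k2](p) splitter set if and only if the set M = [-k1,k2]* (viewed in Z_p*) is a direct factor of the subgroup H = ⟨-1, 2, ..., k2⟩ of Z_p*, i.e., there exists B' ⊆ H such that every element of H is uniquely expressible as m·b' with m ∈ M and b' ∈ B'. -/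
/-! Write `M = [-k1,k2]*` and `H = ⟨-1, 2, …, k2⟩`, so that `M ⊆ H` because `k1 ≤ k2`. A perfect
splitter set `B` is the same thing as a factorization `(ZMod p)ˣ = M·B`: the sets `b·M` are
disjoint, each of size `k1 + k2`, and together they have `p - 1` elements. Factorizations then
pass between `H` and the whole unit group. If `(ZMod p)ˣ = M·B`, then `H = M·(B ∩ H)`, since
`b = m⁻¹·h` lies in `H`. Conversely, `H = M·B'` and `(ZMod p)ˣ = T·H` for a transversal `T`
give `(ZMod p)ˣ = M·(T·B')`. Nonsingularity `p ∤ k2!` holds automatically because `p > k2`. -/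

open Set
open scoped Pointwise

/-- `X = A·B` is a factorization of `X`. -/
abbrev IsFactorization {α : Type*} [Mul α] (A B X : Set α) : Prop :=
  BijOn (fun q : α × α => q.1 * q.2) (A ×ˢ B) X

section Mul
variable {α : Type*} [Mul α] {A B X : Set α}

theorem isFactorization_iff_existsUnique :
    IsFactorization A B X ↔
      (∀ a ∈ A, ∀ b ∈ B, a * b ∈ X) ∧
        ∀ x ∈ X, ∃! q : α × α, q.1 ∈ A ∧ q.2 ∈ B ∧ q.1 * q.2 = x := by
  constructor
  · intro h
    refine ⟨fun a ha b hb => h.mapsTo (mk_mem_prod ha hb), fun x hx => ?_⟩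
    obtain ⟨q, ⟨hq1, hq2⟩, rfl⟩ := h.surjOn hx
    exact ⟨q, ⟨hq1, hq2, rfl⟩, fun q' ⟨hq1', hq2', hq'⟩ => h.injOn ⟨hq1', hq2'⟩ ⟨hq1, hq2⟩ hq'⟩
  · rintro ⟨hmaps, huniq⟩
    refine ⟨fun q hq => hmaps _ hq.1 _ hq.2, fun q hq q' hq' he => ?_, fun x hx => ?_⟩
    · obtain ⟨r, -, hr⟩ := huniq _ (hmaps _ hq.1 _ hq.2)
      exact (hr q ⟨hq.1, hq.2, rfl⟩).trans (hr q' ⟨hq'.1, hq'.2, he.symm⟩).symm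
    · obtain ⟨q, ⟨hq1, hq2, rfl⟩, -⟩ := huniq x hx
      exact ⟨q, ⟨hq1, hq2⟩, rfl⟩

end Mul

theorem IsFactorization.trans {α : Type*} [CommSemigroup α] {A B H T X : Set α}
    (hX : IsFactorization T H X) (hH : IsFactorization A B H) :
    IsFactorization A (T * B) X := by
  refine ⟨?_, ?_, ?_⟩
  · rintro ⟨a, _⟩ ⟨ha, t, ht, b, hb, rfl⟩
    show a * (t * b) ∈ X
    rw [mul_left_comm]
    exact hX.mapsTo (mk_mem_prod ht (hH.mapsTo (mk_mem_prod ha hb)))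
  · rintro ⟨a₁, _⟩ ⟨ha₁, t₁, ht₁, b₁, hb₁, rfl⟩ ⟨a₂, _⟩ ⟨ha₂, t₂, ht₂, b₂, hb₂, rfl⟩ he
    simp only [mul_left_comm a₁, mul_left_comm a₂] at he
    obtain ⟨rfl, hab⟩ := Prod.ext_iff.mp <| hX.injOn
      (mk_mem_prod ht₁ (hH.mapsTo (mk_mem_prod ha₁ hb₁)))
      (mk_mem_prod ht₂ (hH.mapsTo (mk_mem_prod ha₂ hb₂))) he
    obtain ⟨rfl, rfl⟩ := Prod.ext_iff.mp <| hH.injOn (mk_mem_prod ha₁ hb₁) (mk_mem_prod ha₂ hb₂) hab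
    rfl
  · intro x hx
    obtain ⟨⟨t, h⟩, ⟨ht, hh⟩, rfl⟩ := hX.surjOn hx
    obtain ⟨⟨a, b⟩, ⟨ha, hb⟩, rfl⟩ := hH.surjOn hh
    exact ⟨(a, t * b), mk_mem_prod ha (mul_mem_mul ht hb), mul_left_comm _ _ _⟩

section GroupWithZero
variable {G₀ : Type*} [CommGroupWithZero G₀] {H : Submonoid G₀}

theorem IsFactorization.restrict {A B X : Set G₀} (hinv : ∀ x ∈ H, x⁻¹ ∈ H) (h0 : (0 : G₀) ∉ H)
    (hA : A ⊆ H) (hHX : (H : Set G₀) ⊆ X) (hX : IsFactorization A B X) :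
    IsFactorization A (B ∩ H) H := by
  refine ⟨fun q hq => H.mul_mem (hA hq.1) hq.2.2,
    hX.injOn.mono (prod_mono_right inter_subset_left), fun h hh => ?_⟩
  obtain ⟨⟨a, b⟩, ⟨ha, hb⟩, rfl⟩ := hX.surjOn (hHX hh)
  have ha0 : a ≠ 0 := fun ha0 => h0 (ha0 ▸ hA ha)
  have hbH : b ∈ H := by simpa [ha0] using H.mul_mem (hinv a (hA ha)) hh
  exact ⟨(a, b), ⟨ha, hb, hbH⟩, rfl⟩

theorem exists_isFactorization_compl_zero (hinv : ∀ x ∈ H, x⁻¹ ∈ H) (h0 : (0 : G₀) ∉ H) :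
    ∃ T : Set G₀, IsFactorization T H {0}ᶜ := by
  have hne : ∀ x ∈ H, x ≠ 0 := fun x hx hx0 => h0 (hx0 ▸ hx)
  have hunits : ∀ x (hx : x ∈ H), Units.mk0 x (hne x hx) ∈ H.units := fun x hx =>
    (H.mem_units_iff _).mpr ⟨hx, by simpa using hinv x hx⟩
  obtain ⟨S, hS, -⟩ := Subgroup.exists_isComplement_left H.units 1
  refine ⟨Units.val '' S, ?_, ?_, ?_⟩
  · rintro ⟨_, h⟩ ⟨⟨u, -, rfl⟩, hh⟩
    exact mul_ne_zero u.ne_zero (hne h hh)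
  · rintro ⟨_, h₁⟩ ⟨⟨u₁, hu₁, rfl⟩, hh₁⟩ ⟨_, h₂⟩ ⟨⟨u₂, hu₂, rfl⟩, hh₂⟩ he
    have := hS.1 (a₁ := (⟨u₁, hu₁⟩, ⟨_, hunits h₁ hh₁⟩)) (a₂ := (⟨u₂, hu₂⟩, ⟨_, hunits h₂ hh₂⟩))
      (Units.ext he)
    simp only [Prod.mk.injEq, Subtype.mk.injEq, Units.ext_iff, Units.val_mk0] at this
    rw [this.1, this.2]
  · intro x hx
    obtain ⟨⟨⟨s, hs⟩, ⟨k, hk⟩⟩, hsk⟩ := hS.2 (Units.mk0 x hx)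
    refine ⟨(s, k), ⟨⟨s, hs, rfl⟩, ((H.mem_units_iff k).mp hk).1⟩, ?_⟩
    exact (congrArg Units.val hsk).trans (Units.val_mk0 _)

end GroupWithZero

theorem Submonoid.inv_mem_of_ne_zero {K : Type*} [Field K] [Finite K] (S : Submonoid K) {x : K}
    (hx : x ∈ S) (hx0 : x ≠ 0) : x⁻¹ ∈ S := by
  have := Fintype.ofFinite K
  have hcard := Fintype.one_lt_card (α := K)
  have hinv : x⁻¹ = x ^ (Fintype.card K - 2) := by
    refine (eq_inv_of_mul_eq_one_right ?_).symm
    rw [← pow_succ', show Fintype.card K - 2 + 1 = Fintype.card K - 1 by omega,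
      FiniteField.pow_card_sub_one_eq_one x hx0]
  exact hinv ▸ S.pow_mem hx _

section bStar
variable {k1 k2 q : ℕ}

theorem intCast_injOn_Icc (hlt : k1 + k2 < q) :
    InjOn (Int.cast : ℤ → ZMod q) (Finset.Icc (-(k1 : ℤ)) k2) := by
  intro a ha b hb hab
  simp only [Finset.coe_Icc, mem_Icc] at ha hb
  rw [ZMod.intCast_eq_intCast_iff_dvd_sub] at hab
  have := Int.eq_zero_of_abs_lt_dvd hab (abs_sub_lt_iff.mpr ⟨by omega, by omega⟩)
  omega

theorem card_bStar_one (hlt : k1 + k2 < q) : (bStar k1 k2 q 1).card = k1 + k2 := by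
  rw [bStar, Finset.card_image_of_injOn, Finset.card_erase_of_mem (by simp), Int.card_Icc]
  · omega
  · simpa using (intCast_injOn_Icc hlt).mono (Finset.coe_subset.mpr (Finset.erase_subset _ _))

theorem zero_notMem_bStar_one (hlt : k1 + k2 < q) : (0 : ZMod q) ∉ bStar k1 k2 q 1 := by
  simp only [bStar, one_mul, Finset.mem_image, Finset.mem_erase, Finset.mem_Icc, not_exists,
    not_and, and_imp]
  intro j hj0 hj1 hj2 hj
  exact hj0 (intCast_injOn_Icc hlt (by simp; omega) (by simp) (by simp [hj]))

theorem bStar_eq_image_mul (b : ZMod q) :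
    bStar k1 k2 q b = (bStar k1 k2 q 1).image (· * b) := by
  simp only [bStar, Finset.image_image, Function.comp_def, one_mul, mul_comm b]

theorem mul_mem_bStar {m : ZMod q} (b : ZMod q) (hm : m ∈ bStar k1 k2 q 1) :
    m * b ∈ bStar k1 k2 q b := by
  rw [bStar_eq_image_mul]
  exact Finset.mem_image_of_mem _ hm

theorem bStar_one_subset_closure_negOne_natCast (hk : k1 ≤ k2) :
    (bStar k1 k2 q 1 : Set (ZMod q)) ⊆
      Submonoid.closure ({-1} ∪ (fun j : ℕ => (j : ZMod q)) '' Icc 2 k2) := by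
  set H := Submonoid.closure ({-1} ∪ (fun j : ℕ => (j : ZMod q)) '' Icc 2 k2)
  have hnat : ∀ n : ℕ, 1 ≤ n → n ≤ k2 → (n : ZMod q) ∈ H := by
    intro n hn1 hn2
    obtain rfl | hn := eq_or_lt_of_le hn1
    · exact_mod_cast H.one_mem
    · exact Submonoid.subset_closure (Or.inr ⟨n, ⟨hn, hn2⟩, rfl⟩)
  have hneg : (-1 : ZMod q) ∈ H := Submonoid.subset_closure (Or.inl rfl)
  simp only [bStar, one_mul, Finset.coe_image, image_subset_iff, Finset.coe_erase, Finset.coe_Icc]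
  rintro j ⟨⟨hj1, hj2⟩, hj0⟩
  simp only [mem_singleton_iff] at hj0
  obtain ⟨n, rfl | rfl⟩ := Int.eq_nat_or_neg j
  · simpa using hnat n (by omega) (by omega)
  · simpa using H.mul_mem hneg (hnat n (by omega) (by omega))

end bStar

section Prime
variable {k1 k2 p : ℕ} [Fact p.Prime]

theorem zero_notMem_closure_negOne_natCast (hk2 : k2 < p) :
    (0 : ZMod p) ∉ Submonoid.closure ({-1} ∪ (fun j : ℕ => (j : ZMod p)) '' Icc 2 k2) := by
  refine fun h0 => zero_notMem_nonZeroDivisors (Submonoid.closure_le.mpr ?_ h0)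
  rintro _ (h | ⟨j, ⟨hj2, hjk⟩, rfl⟩)
  · simp [mem_singleton_iff.mp h]
  · simpa [ZMod.natCast_eq_zero_iff] using Nat.not_dvd_of_pos_of_lt (by omega) (by omega)

theorem isSplitter_iff (hk : 2 ≤ k1 + k2) (hlt : k1 + k2 < p) {B : Finset (ZMod p)} :
    IsSplitter k1 k2 p B ↔
      MapsTo (fun q : ZMod p × ZMod p => q.1 * q.2) (bStar k1 k2 p 1 ×ˢ B : Set _) {0}ᶜ ∧
        InjOn (fun q : ZMod p × ZMod p => q.1 * q.2) (bStar k1 k2 p 1 ×ˢ B : Set _) := by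
  have hM0 := zero_notMem_bStar_one hlt
  have hcard : ∀ b : ZMod p, b ≠ 0 → (bStar k1 k2 p b).card = k1 + k2 := fun b hb => by
    rw [bStar_eq_image_mul, Finset.card_image_of_injective _ (mul_left_injective₀ hb),
      card_bStar_one hlt]
  constructor
  · rintro ⟨hcardB, hdisj⟩
    have hB0 : ∀ b ∈ B, b ≠ 0 := by
      rintro b hb rfl
      have h1 : (bStar k1 k2 p 0).card ≤ 1 :=
        Finset.card_le_one.mpr fun x hx y hy => by
          rw [bStar_eq_image_mul] at hx hy
          obtain ⟨_, -, rfl⟩ := Finset.mem_image.mp hx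
          obtain ⟨_, -, rfl⟩ := Finset.mem_image.mp hy
          simp only [mul_zero]
      have := hcardB 0 hb
      omega
    refine ⟨fun q hq => mul_ne_zero (ne_of_mem_of_not_mem hq.1 hM0) (hB0 _ hq.2), ?_⟩
    rintro ⟨m₁, b₁⟩ ⟨hm₁, hb₁⟩ ⟨m₂, b₂⟩ ⟨hm₂, hb₂⟩ (he : m₁ * b₁ = m₂ * b₂)
    obtain rfl : b₁ = b₂ := by
      by_contra hne
      refine Finset.disjoint_left.mp (hdisj hb₁ hb₂ hne) (mul_mem_bStar b₁ hm₁) ?_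
      exact he ▸ mul_mem_bStar b₂ hm₂
    rw [mul_right_cancel₀ (hB0 _ hb₁) he]
  · rintro ⟨hmaps, hinj⟩
    obtain ⟨m, hm⟩ : (bStar k1 k2 p 1).Nonempty :=
      Finset.card_pos.mp (by rw [card_bStar_one hlt]; omega)
    have hB0 : ∀ b ∈ B, b ≠ 0 := fun b hb => right_ne_zero_of_mul (hmaps (mk_mem_prod hm hb))
    refine ⟨fun b hb => hcard b (hB0 b hb), fun b₁ hb₁ b₂ hb₂ hne => ?_⟩
    show Disjoint (bStar k1 k2 p b₁) (bStar k1 k2 p b₂)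
    rw [Finset.disjoint_left]
    intro x hx₁ hx₂
    rw [bStar_eq_image_mul] at hx₁ hx₂
    obtain ⟨m₁, hm₁, rfl⟩ := Finset.mem_image.mp hx₁
    obtain ⟨m₂, hm₂, he⟩ := Finset.mem_image.mp hx₂
    exact hne (congrArg Prod.snd (hinj (mk_mem_prod hm₁ hb₁) (mk_mem_prod hm₂ hb₂) he.symm))

theorem isPerfectSplitter_iff_isFactorization (hk : 2 ≤ k1 + k2) (hlt : k1 + k2 < p)
    {B : Finset (ZMod p)} :
    IsPerfectSplitter k1 k2 p B ↔ IsFactorization (bStar k1 k2 p 1 : Set (ZMod p)) B {0}ᶜ := by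
  have hcompl : (({0}ᶜ : Finset (ZMod p)) : Set (ZMod p)) = {0}ᶜ := by simp
  have hcard : ({0}ᶜ : Finset (ZMod p)).card = p - 1 := by simp [Finset.card_compl]
  rw [IsPerfectSplitter, isSplitter_iff hk hlt, IsFactorization, BijOn, and_assoc]
  refine and_congr_right fun hmaps => and_congr_right fun hinj => ?_
  rw [← hcard, ← card_bStar_one hlt, ← Finset.card_product]
  rw [← Finset.coe_product] at hmaps hinj ⊢
  rw [← hcompl] at hmaps ⊢
  exact ⟨fun h => Finset.surjOn_of_injOn_of_card_le _ hmaps hinj h.ge,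
    fun h => Finset.card_nbij _ hmaps hinj h⟩

end Prime

theorem stmt_2 (k1 k2 p : ℕ) (hk : k1 ≤ k2) (hp : p.Prime)
    (hmod : p % (k1 + k2) = 1) (hlt : k1 + k2 < p) :
    (∃ B : Finset (ZMod p), IsPerfectSplitter k1 k2 p B ∧
        Nat.Coprime p (Nat.factorial k2)) ↔
      (∃ B' : Finset (ZMod p),
        (∀ b ∈ B', b ∈ Submonoid.closure
            ({-1} ∪ (fun j : ℕ => (j : ZMod p)) '' Set.Icc 2 k2)) ∧
        ∀ h ∈ Submonoid.closure
            ({-1} ∪ (fun j : ℕ => (j : ZMod p)) '' Set.Icc 2 k2),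
          ∃! q : ZMod p × ZMod p,
            q.1 ∈ bStar k1 k2 p 1 ∧ q.2 ∈ B' ∧ q.1 * q.2 = h) := by
  classical
  have := Fact.mk hp
  have hk2 : 2 ≤ k1 + k2 := by
    by_contra! h
    obtain h | h : k1 + k2 = 0 ∨ k1 + k2 = 1 := by omega
    · exact hp.one_lt.ne' (by simpa [h] using hmod)
    · simp [h, Nat.mod_one] at hmod
  set H := Submonoid.closure ({-1} ∪ (fun j : ℕ => (j : ZMod p)) '' Set.Icc 2 k2)
  have h0 : (0 : ZMod p) ∉ H := zero_notMem_closure_negOne_natCast (by omega)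
  have hinv : ∀ x ∈ H, x⁻¹ ∈ H := fun x hx =>
    H.inv_mem_of_ne_zero hx (ne_of_mem_of_not_mem hx h0)
  have hMH : (bStar k1 k2 p 1 : Set (ZMod p)) ⊆ H := bStar_one_subset_closure_negOne_natCast hk
  simp_rw [isPerfectSplitter_iff_isFactorization hk2 hlt]
  constructor
  · rintro ⟨B, hB, -⟩
    refine ⟨B.filter (· ∈ H), fun b hb => (Finset.mem_filter.mp hb).2,
      (isFactorization_iff_existsUnique.mp ?_).2⟩
    rw [Finset.coe_filter]
    exact hB.restrict hinv h0 hMH fun x hx => ne_of_mem_of_not_mem hx h0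
  · rintro ⟨B', hB'H, hB'⟩
    obtain ⟨T, hT⟩ := exists_isFactorization_compl_zero hinv h0
    have hH : IsFactorization (bStar k1 k2 p 1 : Set (ZMod p)) B' H :=
      isFactorization_iff_existsUnique.mpr
        ⟨fun a ha b hb => H.mul_mem (hMH ha) (hB'H b hb), hB'⟩
    refine ⟨(T * B').toFinite.toFinset, ?_, ?_⟩
    · rw [Set.Finite.coe_toFinset]
      exact hT.trans hH
    · exact hp.coprime_iff_not_dvd.mpr fun h => by have := hp.dvd_factorial.mp h; omega
end

section
/- Let m and n be coprime positive integers, A = {a_1,...,a_m} a set of m integers and B = {b_1,...,b_n} a set of n integers. If the sumset A + B = {a_i + b_j} is a complete set of representatives modulo mn (i.e., its elements are pairwise incongruent modulo mn), then A is a complete set of residues modulo m and B is a complete set of residues modulo n. -/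
/-!
Reduced modulo `N = mn`, the hypothesis says that `(a, b) ↦ a + b` hits every element of
`G = ℤ/Nℤ` exactly once on `A × B`: in the group ring `𝔽_p[G]`, with `α = ∑ X^a`, `β = ∑ X^b`
and `T = ∑_{g ∈ G} X^g`, this is `α β = T`. For a prime `p ∤ m`, Frobenius gives
`α^p = ∑ X^{pa}`, and `α T = m T` gives `α^p β = α^{p-1} T = m^{p-1} T = T`. So every `g` has
`≡ 1 (mod p)`, in particular at least one, representation `pa + b`, and since there are only
`N = |G|` pairs, exactly one. Running over the prime factors of `n`, `(a, b) ↦ na + b` is again a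
bijection onto `G`; reducing modulo `n`, `B` meets every residue class mod `n`, and having `n`
elements it is a complete residue system. `A` is handled symmetrically.
-/

open Finset AddMonoidAlgebra

section HitsEachOnce

variable {ι G : Type*} [DecidableEq G]

def HitsEachOnce (s : Finset ι) (φ : ι → G) : Prop :=
  ∀ t, #{i ∈ s | φ i = t} = 1

variable [Fintype G] {s : Finset ι} {φ : ι → G}

lemma sum_card_filter_eq_card (s : Finset ι) (φ : ι → G) : ∑ t, #{i ∈ s | φ i = t} = #s :=
  (card_eq_sum_card_fiberwise fun _ _ => mem_univ _).symm

lemma HitsEachOnce.card_eq (h : HitsEachOnce s φ) : #s = Fintype.card G := by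
  rw [← sum_card_filter_eq_card s φ, sum_congr rfl fun t _ => h t]
  simp

lemma hitsEachOnce_of_le_one (hle : ∀ t, #{i ∈ s | φ i = t} ≤ 1)
    (hs : #s = Fintype.card G) : HitsEachOnce s φ := fun t =>
  (sum_eq_sum_iff_of_le fun t _ => hle t).1 (by simp [sum_card_filter_eq_card, hs]) t (mem_univ t)

lemma hitsEachOnce_of_one_le (hge : ∀ t, 1 ≤ #{i ∈ s | φ i = t})
    (hs : #s = Fintype.card G) : HitsEachOnce s φ := fun t =>
  ((sum_eq_sum_iff_of_le fun t _ => hge t).1 (by simp [sum_card_filter_eq_card, hs]) t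
    (mem_univ t)).symm

lemma hitsEachOnce_of_injOn (hφ : Set.InjOn φ s) (hs : #s = Fintype.card G) :
    HitsEachOnce s φ :=
  hitsEachOnce_of_le_one (fun _ => card_le_one.2 fun _ hi _ hj =>
    hφ (mem_filter.1 hi).1 (mem_filter.1 hj).1
      ((mem_filter.1 hi).2.trans (mem_filter.1 hj).2.symm)) hs

end HitsEachOnce

section CountingElement

variable (R : Type*) {ι κ G : Type*}

noncomputable def countingElement [Semiring R] (s : Finset ι) (φ : ι → G) : R[G] :=
  ∑ i ∈ s, single (φ i) 1

variable {R}

lemma coeff_countingElement [Semiring R] [DecidableEq G] (s : Finset ι) (φ : ι → G) (t : G) :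
    (countingElement R s φ).coeff t = #{i ∈ s | φ i = t} := by
  simp [countingElement, coeff_sum, coeff_single, Finsupp.single_apply]

lemma countingElement_product_add [Semiring R] [Add G] (s : Finset ι) (u : Finset κ)
    (f : ι → G) (g : κ → G) :
    countingElement R (s ×ˢ u) (fun x => f x.1 + g x.2) =
      countingElement R s f * countingElement R u g := by
  simp [countingElement, sum_mul_sum, ← sum_product', single_mul_single]

lemma countingElement_pow_char [CommRing R] [AddCommMonoid G] (p : ℕ) [Fact p.Prime]
    [CharP R p] (s : Finset ι) (φ : ι → G) :
    countingElement R s φ ^ p = countingElement R s (fun i => p • φ i) := by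
  have : CharP R[G] p := charP_of_injective_algebraMap' R p
  simp [countingElement, sum_pow_char, single_pow]

lemma HitsEachOnce.countingElement_eq [Semiring R] [Fintype G] [DecidableEq G] {s : Finset ι}
    {φ : ι → G} (h : HitsEachOnce s φ) : countingElement R s φ = countingElement R univ id := by
  ext t
  simp [coeff_countingElement, h t, filter_eq']

end CountingElement

section MulUniv

variable {R : Type*} [Semiring R] {ι G : Type*} [AddGroup G] [Fintype G]

lemma countingElement_mul_univ (s : Finset ι) (φ : ι → G) :
    countingElement R s φ * countingElement R univ id = #s • countingElement R univ id := by
  have hshift (g : G) :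
      (single g 1 : R[G]) * countingElement R univ id = countingElement R univ id := by
    simp only [countingElement, mul_sum, single_mul_single, one_mul, id]
    exact Fintype.sum_equiv (Equiv.addLeft g) _ _ fun _ => rfl
  rw [countingElement, sum_mul, sum_congr rfl fun i _ => hshift (φ i), sum_const]

lemma countingElement_pow_mul_univ (s : Finset ι) (φ : ι → G) (j : ℕ) :
    countingElement R s φ ^ j * countingElement R univ id =
      #s ^ j • countingElement R univ id := by
  induction j with
  | zero => simp
  | succ j ih =>
    rw [pow_succ, mul_assoc, countingElement_mul_univ, mul_smul_comm, ih, smul_smul, pow_succ']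

end MulUniv

section Frobenius

variable {ι κ G : Type*} [AddCommGroup G] [Fintype G] [DecidableEq G]
  {A : Finset ι} {B : Finset κ} {f : ι → G} {g : κ → G}

theorem HitsEachOnce.nsmul_add_of_prime {p : ℕ} (hp : p.Prime) (hpA : ¬ p ∣ #A)
    (h : HitsEachOnce (A ×ˢ B) fun x => f x.1 + g x.2) :
    HitsEachOnce (A ×ˢ B) fun x => p • f x.1 + g x.2 := by
  have := Fact.mk hp
  set T := countingElement (ZMod p) (univ : Finset G) id
  have hpA' : (#A : ZMod p) ≠ 0 := by rwa [Ne, ZMod.natCast_eq_zero_iff]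
  have key : countingElement (ZMod p) (A ×ˢ B) (fun x => p • f x.1 + g x.2) = T := calc
    _ = countingElement (ZMod p) A f ^ p * countingElement (ZMod p) B g := by
      rw [countingElement_product_add A B (fun a => p • f a), countingElement_pow_char]
    _ = countingElement (ZMod p) A f ^ (p - 1) * T := by
      rw [← pow_sub_one_mul hp.ne_zero, mul_assoc, ← countingElement_product_add,
        h.countingElement_eq]
    _ = T := by
      rw [countingElement_pow_mul_univ, ← Nat.cast_smul_eq_nsmul (ZMod p), Nat.cast_pow,
        ZMod.pow_card_sub_one_eq_one hpA', one_smul]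
  refine hitsEachOnce_of_one_le (fun t => Nat.one_le_iff_ne_zero.2 fun h0 => ?_) h.card_eq
  have := congr_arg (·.coeff t) key
  simp [coeff_countingElement, h0, T, filter_eq'] at this

theorem HitsEachOnce.nsmul_add_of_coprime {k : ℕ} (hk : k.Coprime #A)
    (h : HitsEachOnce (A ×ˢ B) fun x => f x.1 + g x.2) :
    HitsEachOnce (A ×ˢ B) fun x => k • f x.1 + g x.2 := by
  induction k using induction_on_primes with
  | zero =>
    obtain ⟨a, rfl⟩ := card_eq_one.1 (Nat.coprime_zero_left _ |>.1 hk)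
    intro t
    rw [← h (f a + t)]
    congr 1
    refine filter_congr fun x hx => ?_
    simp only [mem_product, mem_singleton] at hx
    simp [hx.1]
  | one => simpa using h
  | prime_mul p k hp ih =>
    have hpA : ¬ p ∣ #A := fun hpA =>
      hp.one_lt.ne' (Nat.eq_one_of_dvd_coprimes hk (dvd_mul_right p k) hpA)
    simpa [mul_smul] using
      (ih (Nat.Coprime.coprime_mul_left hk)).nsmul_add_of_prime (f := fun a => k • f a) hp hpA

end Frobenius

section Residues

lemma hitsEachOnce_intCast_add {N : ℕ} [NeZero N] {A B : Finset ℤ} (hcard : #A * #B = N)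
    (hsum : ∀ a ∈ A, ∀ b ∈ B, ∀ a' ∈ A, ∀ b' ∈ B,
      (N : ℤ) ∣ (a + b) - (a' + b') → a = a' ∧ b = b') :
    HitsEachOnce (A ×ˢ B) fun x => (x.1 : ZMod N) + x.2 := by
  refine hitsEachOnce_of_injOn (fun x hx y hy hxy => ?_) (by simp [card_product, hcard])
  simp only [coe_product, Set.mem_prod, mem_coe] at hx hy
  have hdvd : (N : ℤ) ∣ (x.1 + x.2) - (y.1 + y.2) := by
    rw [← ZMod.intCast_eq_intCast_iff_dvd_sub]
    push_cast
    exact hxy.symm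
  obtain ⟨h1, h2⟩ := hsum _ hx.1 _ hx.2 _ hy.1 _ hy.2 hdvd
  exact Prod.ext h1 h2

lemma exists_mem_intCast_eq_of_hitsEachOnce {d N : ℕ} (hd : d ∣ N) {A B : Finset ℤ}
    (h : HitsEachOnce (A ×ˢ B) fun x => d • (x.1 : ZMod N) + x.2) (r : ℤ) :
    ∃ b ∈ B, (b : ZMod d) = r := by
  have hr : #{x ∈ A ×ˢ B | d • (x.1 : ZMod N) + x.2 = r} = 1 := h r
  obtain ⟨x, hx⟩ := card_pos.1 (hr ▸ Nat.one_pos)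
  rw [mem_filter, mem_product] at hx
  refine ⟨x.2, hx.1.2, ?_⟩
  have hxd := congr_arg (ZMod.castHom hd (ZMod d)) hx.2
  rwa [map_add, map_nsmul, map_intCast, map_intCast, map_intCast, nsmul_eq_mul, ZMod.natCast_self,
    zero_mul, zero_add] at hxd

lemma existsUnique_dvd_sub_of_forall_exists {n : ℕ} [NeZero n] {B : Finset ℤ} (hB : #B = n)
    (hsurj : ∀ r : ℤ, ∃ b ∈ B, (b : ZMod n) = r) :
    ∀ r : ℤ, ∃! b, b ∈ B ∧ (n : ℤ) ∣ b - r := by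
  have hinj : Set.InjOn (Int.cast : ℤ → ZMod n) B :=
    injOn_of_surjOn_of_card_le (t := univ) _ (fun _ _ => mem_coe.2 (mem_univ _))
      (fun z _ => by simpa using hsurj z.cast) (by simp [hB])
  intro r
  obtain ⟨b, hb, hbr⟩ := hsurj r
  refine ⟨b, ⟨hb, (ZMod.intCast_eq_intCast_iff_dvd_sub r b n).1 hbr.symm⟩, ?_⟩
  rintro b' ⟨hb', hdvd⟩
  exact hinj hb' hb ((ZMod.intCast_eq_intCast_iff_dvd_sub r b' n).2 hdvd |>.symm.trans hbr.symm)

theorem forall_existsUnique_dvd_sub_right {m n : ℕ} (hm : 0 < m) (hn : 0 < n)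
    (hmn : Nat.Coprime m n) {A B : Finset ℤ} (hA : #A = m) (hB : #B = n)
    (hsum : ∀ a ∈ A, ∀ b ∈ B, ∀ a' ∈ A, ∀ b' ∈ B,
      ((m * n : ℕ) : ℤ) ∣ (a + b) - (a' + b') → a = a' ∧ b = b') :
    ∀ r : ℤ, ∃! b, b ∈ B ∧ (n : ℤ) ∣ b - r := by
  have : NeZero (m * n) := ⟨by positivity⟩
  have : NeZero n := ⟨hn.ne'⟩
  have h := (hitsEachOnce_intCast_add (by rw [hA, hB]) hsum).nsmul_add_of_coprime
    (k := n) (hA ▸ hmn.symm)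
  exact existsUnique_dvd_sub_of_forall_exists hB
    (exists_mem_intCast_eq_of_hitsEachOnce (dvd_mul_left n m) h)

end Residues

theorem stmt_6 (m n : ℕ) (hm : 0 < m) (hn : 0 < n) (hmn : Nat.Coprime m n)
    (A B : Finset ℤ) (hA : A.card = m) (hB : B.card = n)
    (hsum : ∀ a ∈ A, ∀ b ∈ B, ∀ a' ∈ A, ∀ b' ∈ B,
      ((m * n : ℕ) : ℤ) ∣ (a + b) - (a' + b') → a = a' ∧ b = b') :
    (∀ r : ℤ, ∃! a, a ∈ A ∧ (m : ℤ) ∣ a - r) ∧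
      (∀ r : ℤ, ∃! b, b ∈ B ∧ (n : ℤ) ∣ b - r) := by
  refine ⟨forall_existsUnique_dvd_sub_right hn hm hmn.symm hB hA ?_,
    forall_existsUnique_dvd_sub_right hm hn hmn hA hB hsum⟩
  intro b hb a ha b' hb' a' ha' hdvd
  obtain ⟨h1, h2⟩ := hsum a ha b hb a' ha' b' hb' (by rwa [mul_comm m, add_comm a, add_comm a'])
  exact ⟨h2, h1⟩
end

section
/- Let 0 ≤ k1 ≤ k2 be integers and p a prime with p ≡ 1 (mod k1+k2) and gcd(k1+k2, (p-1)/(k1+k2)) = 1. Let g be a primitive root modulo p and N = {ind_g(j) : j ∈ [-k1,k2], j ≠ 0}, where ind_g(b) is the unique index i ∈ [0, p-2] with g^i ≡ b (mod p). Then a nonsingular perfect B[-k1,k2](p) splitter set exists if and only if N is a complete set of residues modulo k1+k2. -/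
open Finset

namespace MonoidAlgebra

variable {G : Type*} [CommGroup G] (R : Type*) [CommSemiring R]

noncomputable def powIndicator (t : ℕ) (A : Finset G) : MonoidAlgebra R G :=
  ∑ a ∈ A, single (a ^ t) 1

theorem powIndicator_pow_char (q : ℕ) [ExpChar R q] (t : ℕ) (A : Finset G) :
    powIndicator R t A ^ q = powIndicator R (t * q) A := by
  have : ExpChar (MonoidAlgebra R G) q :=
    expChar_of_injective_ringHom (f := singleOneRingHom) single_right_injective q
  simp only [powIndicator, sum_pow_char, single_pow, one_pow, pow_mul]

variable [Fintype G]

theorem single_one_mul_sum_univ (a : G) :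
    single a (1 : R) * ∑ y : G, single y 1 = ∑ y : G, single y 1 := by
  simp only [mul_sum, single_mul_single, one_mul]
  exact Equiv.sum_comp (Equiv.mulLeft a) (fun y => single y (1 : R))

theorem powIndicator_pow_mul_sum_univ (t k : ℕ) (A : Finset G) :
    powIndicator R t A ^ k * ∑ y : G, single y (1 : R) = ((#A : R) ^ k) • ∑ y : G, single y 1 := by
  induction k with
  | zero => simp
  | succ k ih =>
    rw [pow_succ', mul_assoc, ih, mul_smul_comm, powIndicator, sum_mul,
      sum_congr rfl fun a _ => single_one_mul_sum_univ R (a ^ t), sum_const,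
      ← Nat.cast_smul_eq_nsmul R, smul_smul, pow_succ]

omit [CommGroup G] in
theorem coeff_sum_univ_single [Monoid G] (x : G) : (∑ y : G, single y (1 : R)).coeff x = 1 := by
  simp [coeff_sum, coeff_single]

end MonoidAlgebra

section Dilation

variable {G : Type*} [CommGroup G] [DecidableEq G]

def powMulCount (t : ℕ) (A S : Finset G) (x : G) : ℕ :=
  #{as ∈ A ×ˢ S | as.1 ^ t * as.2 = x}

/-- `G = A^(t) ⊕ S`. Pairs are counted, so this also forces `a ↦ a ^ t` to be injective on `A`. -/
def IsPowFactorization (t : ℕ) (A S : Finset G) : Prop :=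
  ∀ x, powMulCount t A S x = 1

theorem sum_powMulCount [Fintype G] (t : ℕ) (A S : Finset G) :
    ∑ x, powMulCount t A S x = #A * #S := by
  rw [← card_product]
  exact (card_eq_sum_card_fiberwise fun _ _ => mem_univ _).symm

open MonoidAlgebra

theorem coeff_powIndicator_mul (R : Type*) [CommSemiring R] (t : ℕ) (A S : Finset G) (x : G) :
    (powIndicator R t A * powIndicator R 1 S).coeff x = powMulCount t A S x := by
  simp only [powIndicator, sum_mul_sum, single_mul_single, mul_one, pow_one, coeff_sum,
    Finsupp.finsetSum_apply, coeff_single, Finsupp.single_apply, ← sum_product', powMulCount]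
  rw [sum_boole]

/-- In `𝔽_q[G]`, Frobenius gives `(∑ a ^ t) ^ q * ∑ s = (∑ a ^ t) ^ (q - 1) * ∑_G x = ∑_G x`,
so every count for `t * q` is `1` modulo `q`; as the counts add up to `|G|`, they are all `1`. -/
theorem IsPowFactorization.mul_prime [Fintype G] {t q : ℕ} {A S : Finset G}
    (h : IsPowFactorization t A S) (hq : q.Prime) (hA : ¬ q ∣ #A) :
    IsPowFactorization (t * q) A S := by
  have : Fact q.Prime := ⟨hq⟩
  set U : MonoidAlgebra (ZMod q) G := ∑ y : G, single y 1
  have hAS : powIndicator (ZMod q) t A * powIndicator (ZMod q) 1 S = U := by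
    ext x
    rw [coeff_powIndicator_mul, h x, Nat.cast_one, coeff_sum_univ_single]
  have hAqS : powIndicator (ZMod q) (t * q) A * powIndicator (ZMod q) 1 S = U := by
    have hA' : (#A : ZMod q) ≠ 0 := by rwa [Ne, ZMod.natCast_eq_zero_iff]
    rw [← powIndicator_pow_char, ← pow_sub_one_mul hq.ne_zero, mul_assoc, hAS,
      powIndicator_pow_mul_sum_univ, ZMod.pow_card_sub_one_eq_one hA', one_smul]
  have hmod : ∀ x, (powMulCount (t * q) A S x : ZMod q) = 1 := fun x => by
    rw [← coeff_powIndicator_mul, hAqS, coeff_sum_univ_single]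
  have hpos : ∀ x, 1 ≤ powMulCount (t * q) A S x := fun x => by
    by_contra! h0
    simpa [Nat.lt_one_iff.mp h0] using hmod x
  have hsum : ∑ x, powMulCount (t * q) A S x = ∑ x : G, 1 := by
    rw [sum_powMulCount, ← sum_powMulCount t, sum_congr rfl fun x _ => h x]
  intro x
  exact ((sum_eq_sum_iff_of_le fun x _ => hpos x).mp hsum.symm x (mem_univ x)).symm

theorem IsPowFactorization.dilate_of_coprime [Fintype G] {t : ℕ} {A S : Finset G}
    (h : IsPowFactorization 1 A S) (ht : 0 < t) (hco : t.Coprime #A) :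
    IsPowFactorization t A S := by
  induction t using Nat.strong_induction_on with
  | _ t ih =>
    rcases (Nat.one_le_iff_ne_zero.mpr ht.ne').eq_or_lt with rfl | ht1
    · exact h
    have hq := Nat.minFac_prime ht1.ne'
    have hdvd := Nat.minFac_dvd t
    rw [← Nat.div_mul_cancel hdvd]
    refine IsPowFactorization.mul_prime ?_ hq fun hA => hq.one_lt.ne' ?_
    · exact ih _ (Nat.div_lt_self ht hq.one_lt) (Nat.div_pos (Nat.minFac_le ht) hq.pos)
        (hco.coprime_dvd_left (Nat.div_dvd_of_dvd hdvd))
    · exact Nat.dvd_one.mp (hco ▸ Nat.dvd_gcd hdvd hA)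

theorem powMulCount_units {M₀ : Type*} [CommGroupWithZero M₀] [Fintype M₀] [DecidableEq M₀]
    (B S : Finset M₀) (x : M₀ˣ) :
    powMulCount 1 {u : M₀ˣ | ↑u ∈ B} {u | ↑u ∈ S} x = #{bs ∈ B ×ˢ S | bs.1 * bs.2 = (x : M₀)} := by
  refine card_nbij (Prod.map Units.val Units.val) (fun as has => ?_)
    (fun as _ as' _ h =>
      Prod.ext (Units.ext (congrArg Prod.fst h)) (Units.ext (congrArg Prod.snd h)))
    (fun bs hbs => ?_)
  · simp only [coe_filter, Set.mem_ofPred_eq, mem_product, mem_filter, mem_univ, true_and,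
      pow_one] at has ⊢
    exact ⟨has.1, by rw [← has.2]; rfl⟩
  · simp only [coe_filter, mem_product, Set.mem_ofPred_eq] at hbs
    obtain ⟨⟨hb, hs⟩, he⟩ := hbs
    have hb0 : bs.1 ≠ 0 := left_ne_zero_of_mul (he ▸ x.ne_zero)
    have hs0 : bs.2 ≠ 0 := right_ne_zero_of_mul (he ▸ x.ne_zero)
    refine ⟨(Units.mk0 _ hb0, Units.mk0 _ hs0), ?_, rfl⟩
    simp only [coe_filter, mem_product, mem_filter, mem_univ, true_and, Units.val_mk0, pow_one,
      Set.mem_ofPred_eq]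
    exact ⟨⟨hb, hs⟩, Units.ext he⟩

end Dilation

theorem card_units_filter_mem {M₀ : Type*} [GroupWithZero M₀] [Fintype M₀] [DecidableEq M₀]
    {B : Finset M₀} (hB : 0 ∉ B) : #{u : M₀ˣ | ↑u ∈ B} = #B :=
  card_nbij Units.val (fun u hu => (mem_filter.mp hu).2) (fun u _ u' _ h => Units.ext h)
    fun b hb => ⟨Units.mk0 b (ne_of_mem_of_not_mem hb hB), by simpa using hb, rfl⟩

theorem Finset.existsUnique_of_exists_of_card_le {α : Type*} {T : Finset α} {m : ℕ}
    (R : α → ℕ → Prop) (hT : #T ≤ m) (hfun : ∀ j ∈ T, ∀ c c', R j c → R j c' → c = c')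
    (hsurj : ∀ c < m, ∃ j ∈ T, R j c) : ∀ c < m, ∃! j, j ∈ T ∧ R j c := by
  choose F hFT hFR using fun c (hc : c ∈ range m) => hsurj c (mem_range.mp hc)
  have hF := surj_on_of_inj_on_of_card_le F hFT
    (fun c c' hc hc' h => hfun _ (hFT c hc) c c' (hFR c hc) (h ▸ hFR c' hc')) (by rwa [card_range])
  intro c hc
  refine ⟨F c (mem_range.mpr hc), ⟨hFT _ _, hFR _ _⟩, fun j ⟨hj, hjc⟩ => ?_⟩
  obtain ⟨c', hc', rfl⟩ := hF j hj
  obtain rfl := hfun _ hj c c' hjc (hFR c' hc')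
  rfl

theorem IsPrimitiveRoot.pow_eq_pow_iff_modEq {M : Type*} [CommMonoid M] {g : M} {k : ℕ}
    (hg : IsPrimitiveRoot g k) (hk : k ≠ 0) {i i' : ℕ} : g ^ i = g ^ i' ↔ i ≡ i' [MOD k] :=
  hg.eq_orderOf ▸ (hg.isOfFinOrder hk).pow_eq_pow_iff_modEq

namespace ZMod

theorem intCast_injOn_Icc {p : ℕ} {a b : ℤ} (h : b - a < p) :
    Set.InjOn (Int.cast : ℤ → ZMod p) (Icc a b) := by
  intro j hj j' hj' he
  rw [coe_Icc, Set.mem_Icc] at hj hj'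
  have hdvd := (intCast_eq_intCast_iff_dvd_sub j j' p).mp he
  have := Int.eq_zero_of_abs_lt_dvd hdvd (by rw [abs_lt]; constructor <;> omega)
  omega

variable {p : ℕ} [Fact p.Prime] {g : ZMod p}

theorem exists_pow_eq_of_isPrimitiveRoot (hg : IsPrimitiveRoot g (p - 1)) {x : ZMod p}
    (hx : x ≠ 0) : ∃ i < p - 1, g ^ i = x :=
  have : NeZero (p - 1) := ⟨(Nat.sub_pos_of_lt (Fact.out : p.Prime).one_lt).ne'⟩
  hg.eq_pow_of_pow_eq_one (pow_card_sub_one_eq_one hx)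

variable {m : ℕ} {T : Finset ℤ}

theorem existsUnique_pow_mod_eq_of_forall_exists (hg : IsPrimitiveRoot g (p - 1))
    (hm : m ∣ p - 1) (hT : #T ≤ m) (h : ∀ c < m, ∃ j ∈ T, ∃ i, g ^ i = j ∧ i ≡ c [MOD m]) :
    ∀ c < m, ∃! j : ℤ, j ∈ T ∧ ∃ i, i ≤ p - 2 ∧ g ^ i = (j : ZMod p) ∧ i % m = c := by
  have hN : 0 < p - 1 := Nat.sub_pos_of_lt (Fact.out : p.Prime).one_lt
  refine existsUnique_of_exists_of_card_le _ hT
    (fun j _ c c' ⟨i, hi, hij, hic⟩ ⟨i', hi', hij', hic'⟩ => ?_) fun c hc => ?_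
  · rw [← hic, ← hic', hg.pow_inj (by omega) (by omega) (hij.trans hij'.symm)]
  · obtain ⟨j, hj, i, hij, hic⟩ := h c hc
    have := Nat.mod_lt i hN
    refine ⟨j, hj, i % (p - 1), by omega, ?_, ?_⟩
    · rwa [hg.eq_orderOf, pow_mod_orderOf]
    · rw [Nat.mod_mod_of_dvd _ hm, hic, Nat.mod_eq_of_lt hc]

theorem eq_of_pow_modEq_of_existsUnique (hg : IsPrimitiveRoot g (p - 1)) (hm : m ∣ p - 1)
    (h : ∀ c < m, ∃! j : ℤ, j ∈ T ∧ ∃ i, i ≤ p - 2 ∧ g ^ i = (j : ZMod p) ∧ i % m = c) :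
    ∀ j ∈ T, ∀ j' ∈ T, ∀ i i' : ℕ, g ^ i = j → g ^ i' = j' → i ≡ i' [MOD m] → j = j' := by
  have hN : 0 < p - 1 := Nat.sub_pos_of_lt (Fact.out : p.Prime).one_lt
  have hrel : ∀ j ∈ T, ∀ i, g ^ i = (j : ZMod p) →
      j ∈ T ∧ ∃ i₀, i₀ ≤ p - 2 ∧ g ^ i₀ = (j : ZMod p) ∧ i₀ % m = i % m := fun j hj i hi => by
    have := Nat.mod_lt i hN
    refine ⟨hj, i % (p - 1), by omega, ?_, Nat.mod_mod_of_dvd _ hm⟩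
    rwa [hg.eq_orderOf, pow_mod_orderOf]
  intro j hj j' hj' i i' hi hi' hii'
  exact (h (i % m) (Nat.mod_lt _ (Nat.pos_of_dvd_of_pos hm hN))).unique (hrel j hj i hi)
    (hii' ▸ hrel j' hj' i' hi')

end ZMod

noncomputable def puncturedIcc (k1 k2 : ℕ) : Finset ℤ := (Icc (-(k1 : ℤ)) k2).erase 0

section Splitter

variable {k1 k2 p : ℕ}

theorem card_puncturedIcc (k1 k2 : ℕ) : #(puncturedIcc k1 k2) = k1 + k2 := by
  rw [puncturedIcc, card_erase_of_mem (by simp), Int.card_Icc]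
  omega

theorem mem_bStar_iff {b x : ZMod p} :
    x ∈ bStar k1 k2 p b ↔ ∃ s ∈ (puncturedIcc k1 k2).image Int.cast, b * s = x := by
  simp [bStar, puncturedIcc]

theorem intCast_injOn_puncturedIcc (h : k1 + k2 < p) :
    Set.InjOn (Int.cast : ℤ → ZMod p) (puncturedIcc k1 k2) :=
  (ZMod.intCast_injOn_Icc (by omega)).mono fun _ hj => mem_of_mem_erase hj

theorem intCast_ne_zero_of_mem_puncturedIcc (h : k1 + k2 < p) {j : ℤ}
    (hj : j ∈ puncturedIcc k1 k2) : (j : ZMod p) ≠ 0 := fun h0 =>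
  ne_of_mem_erase hj <| ZMod.intCast_injOn_Icc (by omega) (mem_of_mem_erase hj) (by simp)
    (h0.trans Int.cast_zero.symm)

variable [Fact p.Prime]

theorem card_bStar (h : k1 + k2 < p) {b : ZMod p} (hb : b ≠ 0) : #(bStar k1 k2 p b) = k1 + k2 :=
  (card_image_of_injOn fun _ hj _ hj' he =>
    intCast_injOn_puncturedIcc h hj hj' (mul_left_cancel₀ hb he)).trans (card_puncturedIcc k1 k2)

theorem isPerfectSplitter_image_pow {g : ZMod p} (hg : IsPrimitiveRoot g (p - 1)) {n : ℕ}
    (hn : (k1 + k2) * n = p - 1)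
    (hinj : ∀ j ∈ puncturedIcc k1 k2, ∀ j' ∈ puncturedIcc k1 k2, ∀ i i' : ℕ,
      g ^ i = j → g ^ i' = j' → i ≡ i' [MOD k1 + k2] → j = j') :
    IsPerfectSplitter k1 k2 p ((range n).image fun i => g ^ ((k1 + k2) * i)) := by
  have hp := (Fact.out : p.Prime).one_lt
  have hN : p - 1 ≠ 0 := by omega
  have hmp : k1 + k2 < p := by
    have := Nat.le_of_dvd (by omega) (Dvd.intro n hn)
    omega
  have hm0 : 0 < k1 + k2 := Nat.pos_of_ne_zero fun h => hN (by rw [← hn, h, zero_mul])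
  have hg0 : g ≠ 0 := hg.ne_zero hN
  have hpow_inj : Set.InjOn (fun i => g ^ ((k1 + k2) * i)) (range n) := fun i hi i' hi' h =>
    Nat.eq_of_mul_eq_mul_left hm0 <| hg.pow_inj
      (hn ▸ Nat.mul_lt_mul_of_pos_left (mem_range.mp hi) hm0)
      (hn ▸ Nat.mul_lt_mul_of_pos_left (mem_range.mp hi') hm0) h
  refine ⟨⟨fun b hb => ?_, ?_⟩, by rw [card_image_of_injOn hpow_inj, card_range, hn]⟩
  · obtain ⟨i, -, rfl⟩ := mem_image.mp hb
    exact card_bStar hmp (pow_ne_zero _ hg0)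
  rintro _ hb _ hb' hne
  obtain ⟨i, -, rfl⟩ := mem_image.mp hb
  obtain ⟨i', -, rfl⟩ := mem_image.mp hb'
  refine disjoint_left.mpr fun x hx hx' => ?_
  obtain ⟨j, hj, rfl⟩ := mem_image.mp hx
  obtain ⟨j', hj', hjj'⟩ := mem_image.mp hx'
  have hj0 := intCast_ne_zero_of_mem_puncturedIcc hmp hj
  obtain ⟨α, -, hα⟩ := ZMod.exists_pow_eq_of_isPrimitiveRoot hg hj0
  obtain ⟨α', -, hα'⟩ :=
    ZMod.exists_pow_eq_of_isPrimitiveRoot hg (intCast_ne_zero_of_mem_puncturedIcc hmp hj')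
  have hmodN : (k1 + k2) * i' + α' ≡ (k1 + k2) * i + α [MOD p - 1] :=
    (hg.pow_eq_pow_iff_modEq hN).mp (by rw [pow_add, pow_add, hα, hα', hjj'])
  obtain rfl : j' = j := hinj j' hj' j hj α' α hα' hα <| by
    simpa [Nat.ModEq, Nat.mul_add_mod] using hmodN.of_dvd (Dvd.intro n hn)
  exact hne (mul_right_cancel₀ hj0 hjj').symm

theorem IsPerfectSplitter.zero_notMem {B : Finset (ZMod p)} (hB : IsPerfectSplitter k1 k2 p B)
    (hm : 2 ≤ k1 + k2) : (0 : ZMod p) ∉ B := fun h0 => by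
  have hsub : bStar k1 k2 p 0 ⊆ {0} := fun x hx => by
    obtain ⟨j, -, rfl⟩ := mem_image.mp hx
    simp
  have := card_le_card hsub
  rw [hB.1.1 0 h0, card_singleton] at this
  omega

theorem IsPerfectSplitter.biUnion_bStar {B : Finset (ZMod p)} (hB : IsPerfectSplitter k1 k2 p B)
    (hm : 2 ≤ k1 + k2) (hmp : k1 + k2 < p) : B.biUnion (bStar k1 k2 p) = univ.erase 0 := by
  refine eq_of_subset_of_card_le (fun x hx => ?_) ?_
  · obtain ⟨b, hb, hx⟩ := mem_biUnion.mp hx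
    obtain ⟨j, hj, rfl⟩ := mem_image.mp hx
    exact mem_erase.mpr ⟨mul_ne_zero (ne_of_mem_of_not_mem hb (hB.zero_notMem hm))
      (intCast_ne_zero_of_mem_puncturedIcc hmp hj), mem_univ _⟩
  · rw [card_erase_of_mem (mem_univ _), card_univ, ZMod.card, card_biUnion hB.1.2,
      sum_congr rfl hB.1.1, sum_const, smul_eq_mul, mul_comm, hB.2]

theorem IsPerfectSplitter.card_filter_mul_eq {B : Finset (ZMod p)}
    (hB : IsPerfectSplitter k1 k2 p B) (hm : 2 ≤ k1 + k2) (hmp : k1 + k2 < p) {x : ZMod p}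
    (hx : x ≠ 0) :
    #{bs ∈ B ×ˢ (puncturedIcc k1 k2).image Int.cast | bs.1 * bs.2 = x} = 1 := by
  have hxB : x ∈ B.biUnion (bStar k1 k2 p) := by simpa [hB.biUnion_bStar hm hmp] using hx
  obtain ⟨b, hb, hxb⟩ := mem_biUnion.mp hxB
  obtain ⟨s, hs, rfl⟩ := mem_bStar_iff.mp hxb
  have hb0 := ne_of_mem_of_not_mem hb (hB.zero_notMem hm)
  refine card_eq_one.mpr ⟨(b, s), ext fun ⟨b', s'⟩ => ?_⟩
  simp only [mem_filter, mem_product, mem_singleton, Prod.mk.injEq]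
  refine ⟨fun ⟨⟨hb', hs'⟩, he⟩ => ?_, fun ⟨hbb, hss⟩ => ⟨⟨hbb ▸ hb, hss ▸ hs⟩, by rw [hbb, hss]⟩⟩
  obtain rfl : b' = b := by
    by_contra hne
    exact disjoint_left.mp (hB.1.2 hb' hb hne) (mem_bStar_iff.mpr ⟨s', hs', he⟩)
      (mem_bStar_iff.mpr ⟨s, hs, rfl⟩)
  exact ⟨rfl, mul_left_cancel₀ hb0 he⟩

theorem IsPerfectSplitter.exists_pow_modEq {B : Finset (ZMod p)} (hB : IsPerfectSplitter k1 k2 p B)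
    {g : ZMod p} (hg : IsPrimitiveRoot g (p - 1)) (hm : 2 ≤ k1 + k2) (hmp : k1 + k2 < p)
    (hco : (k1 + k2).Coprime ((p - 1) / (k1 + k2))) (c : ℕ) :
    ∃ j ∈ puncturedIcc k1 k2, ∃ i, g ^ i = j ∧ i ≡ c [MOD k1 + k2] := by
  have hN : p - 1 ≠ 0 := by omega
  set S := (puncturedIcc k1 k2).image (Int.cast : ℤ → ZMod p)
  have hfac : IsPowFactorization 1 {u : (ZMod p)ˣ | ↑u ∈ B} {u | ↑u ∈ S} := fun x => by
    rw [powMulCount_units]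
    exact hB.card_filter_mul_eq hm hmp x.ne_zero
  have hcard : #{u : (ZMod p)ˣ | ↑u ∈ B} = (p - 1) / (k1 + k2) := by
    rw [card_units_filter_mem (hB.zero_notMem hm), ← hB.2, Nat.mul_div_cancel_left _ (by omega)]
  have hgc : g ^ c ≠ 0 := pow_ne_zero _ (hg.ne_zero hN)
  have hpos := (hfac.dilate_of_coprime (t := k1 + k2) (by omega) (hcard ▸ hco)
    (Units.mk0 _ hgc)).symm ▸ one_pos
  obtain ⟨⟨a, s⟩, hmem⟩ := card_pos.mp hpos
  simp only [mem_filter, mem_product, mem_univ, true_and, S] at hmem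
  obtain ⟨⟨-, hs⟩, he⟩ := hmem
  obtain ⟨j, hj, hjs⟩ := mem_image.mp hs
  obtain ⟨α, -, hα⟩ := ZMod.exists_pow_eq_of_isPrimitiveRoot hg a.ne_zero
  obtain ⟨i, -, hi⟩ := ZMod.exists_pow_eq_of_isPrimitiveRoot hg s.ne_zero
  refine ⟨j, hj, i, hi.trans hjs.symm, ?_⟩
  have hmodN : α * (k1 + k2) + i ≡ c [MOD p - 1] := (hg.pow_eq_pow_iff_modEq hN).mp <| by
    rw [pow_add, pow_mul, hα, hi, ← Units.val_pow_eq_pow_val, ← Units.val_mul, he, Units.val_mk0]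
  simpa [Nat.ModEq] using hmodN.of_dvd (Dvd.intro _ hB.2)

end Splitter
theorem stmt_7_general (k1 k2 p : ℕ) (hp : p.Prime)
    (hmod : p % (k1 + k2) = 1)
    (hco : Nat.Coprime (k1 + k2) ((p - 1) / (k1 + k2)))
    (g : ZMod p) (hg : IsPrimitiveRoot g (p - 1)) :
    (∃ B : Finset (ZMod p), IsPerfectSplitter k1 k2 p B ∧
        Nat.Coprime p (Nat.factorial k2)) ↔
      (∀ c : ℕ, c < k1 + k2 →
        ∃! j : ℤ, j ∈ (Finset.Icc (-(k1 : ℤ)) (k2 : ℤ)).erase 0 ∧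
          ∃ i : ℕ, i ≤ p - 2 ∧ g ^ i = (j : ZMod p) ∧ i % (k1 + k2) = c) := by
  have hm : 2 ≤ k1 + k2 := by
    by_contra! h
    interval_cases hk : k1 + k2
    · exact hp.ne_one (by simpa using hmod)
    · rw [Nat.mod_one] at hmod
      exact absurd hmod zero_ne_one
  have : Fact p.Prime := ⟨hp⟩
  have hdvd : k1 + k2 ∣ p - 1 :=
    (Nat.modEq_iff_dvd' hp.one_le).mp (by rw [Nat.ModEq, hmod, Nat.mod_eq_of_lt hm])
  have hmp : k1 + k2 < p := by
    have := Nat.le_of_dvd (Nat.sub_pos_of_lt hp.one_lt) hdvd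
    omega
  constructor
  · rintro ⟨B, hB, -⟩
    exact ZMod.existsUnique_pow_mod_eq_of_forall_exists hg hdvd (card_puncturedIcc k1 k2).le
      fun c _ => hB.exists_pow_modEq hg hm hmp hco c
  · intro h
    refine ⟨_, isPerfectSplitter_image_pow hg (Nat.mul_div_cancel' hdvd)
      (ZMod.eq_of_pow_modEq_of_existsUnique hg hdvd h), ?_⟩
    exact hp.coprime_iff_not_dvd.mpr fun hpk => by
      have := hp.dvd_factorial.mp hpk
      omega

theorem stmt_7 (k1 k2 p : ℕ) (hk : k1 ≤ k2) (hp : p.Prime)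
    (hmod : p % (k1 + k2) = 1)
    (hco : Nat.Coprime (k1 + k2) ((p - 1) / (k1 + k2)))
    (g : ZMod p) (hg : IsPrimitiveRoot g (p - 1)) :
    (∃ B : Finset (ZMod p), IsPerfectSplitter k1 k2 p B ∧
        Nat.Coprime p (Nat.factorial k2)) ↔
      (∀ c : ℕ, c < k1 + k2 →
        ∃! j : ℤ, j ∈ (Finset.Icc (-(k1 : ℤ)) (k2 : ℤ)).erase 0 ∧
          ∃ i : ℕ, i ≤ p - 2 ∧ g ^ i = (j : ZMod p) ∧ i % (k1 + k2) = c) :=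
  stmt_7_general k1 k2 p hp hmod hco g hg
end

section
/- Let p ≡ 5 (mod 8) be a prime. Then there exists a nonsingular perfect B[0,4](p) splitter set if and only if 6 is a quartic residue modulo p (i.e., 6 ≡ x^4 (mod p) for some x). -/
/-!
Put `m = (p - 1) / 4`, which is odd, and `χ y = y ^ m`. On nonzero `y` it takes the four values
`1, ε, -1, -ε`, where `ε = χ 2` satisfies `ε² = -1` because `2` is a non-residue, and `χ 4 = -1`.
A perfect splitter set is a factorisation `(ZMod p)ˣ = B · {1, 2, 3, 4}`, and `6` is a quartic
residue iff `χ 6 = 1`, i.e. iff `χ 3 = -ε`, i.e. iff `χ` is injective on `{1, 2, 3, 4}`.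

In that case `B = ker χ` is a factor. Conversely, summing `y ^ t` over a factorisation gives
`(∑ b ∈ B, b ^ t) * (1 + 2 ^ t + 3 ^ t + 4 ^ t) = 0` for `0 < t < p - 1`. If `χ 3 = ±1` the second
factor is `2` at `t = 2m`; if `χ 3 = ε` it is `±2ε` at `t = m` and `t = 3m`. Either way the
vanishing sums `∑ b ∈ B, χ b ^ k` force `|B| = m` to be even.
-/

open Finset

theorem eq_one_or_eq_neg_one_or_eq_or_eq_neg_of_pow_four_eq_one {K : Type*} [Field K]
    {ε z : K} (hε : ε ^ 2 = -1) (hz : z ^ 4 = 1) : z = 1 ∨ z = -1 ∨ z = ε ∨ z = -ε := by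
  have : (z - 1) * (z + 1) * ((z - ε) * (z + ε)) = 0 := by
    linear_combination hz + (1 - z ^ 2) * hε
  simp only [mul_eq_zero, sub_eq_zero, add_eq_zero_iff_eq_neg] at this
  tauto

theorem card_fourth_roots_of_sq_eq_neg_one {K : Type*} [Field K] [DecidableEq K] {ε : K}
    (hε : ε ^ 2 = -1) (h2 : (2 : K) ≠ 0) : #({1, ε, -ε, -1} : Finset K) = 4 := by
  have h1 : (1 : K) ≠ -1 := fun h => h2 (by linear_combination h)
  have hε1 : ε ≠ 1 := by rintro rfl; exact h1 (by simpa using hε)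
  have hεn1 : ε ≠ -1 := by rintro rfl; exact h1 (by simpa using hε)
  have hεε : ε ≠ -ε := fun h => by
    have : (2 : K) * ε = 0 := by linear_combination h
    rcases mul_eq_zero.1 this with h' | rfl
    · exact h2 h'
    · simp at hε
  have h1ε : (1 : K) ≠ -ε := fun h => hεn1 (by linear_combination h)
  rw [card_insert_of_notMem (by simp [hε1.symm, h1ε, h1]),
    card_insert_of_notMem (by simp [hεε, hεn1]), card_pair (by simpa using hε1)]

theorem exists_pow_four_eq_of_pow_eq_one {M : Type*} [Monoid M] {a : M} {m : ℕ} (hm : Odd m)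
    (ha : a ^ m = 1) : ∃ x, x ^ 4 = a := by
  obtain ⟨k, rfl⟩ := hm
  refine ⟨a ^ ((k + 1) ^ 2), ?_⟩
  rw [← pow_mul, show (k + 1) ^ 2 * 4 = (2 * k + 1) * (2 * k + 3) + 1 by ring, pow_succ, pow_mul,
    ha, one_pow, one_mul]

section Parity

variable {K : Type*} [Field K] {p : ℕ} [CharP K p] {ι : Type*} {s : Finset ι} {f : ι → K}

theorem even_card_of_sum_eq_zero {c : K} (hc : c ≠ 0) (hs : #s < p)
    (hf : ∀ i ∈ s, f i ^ 2 = c ^ 2) (hsum : ∑ i ∈ s, f i = 0) : Even #s := by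
  classical
  have hneg : ∀ i ∈ s.filter (¬ f · = c), f i = -c := fun i hi =>
    ((sq_eq_sq_iff_eq_or_eq_neg.1 (hf i (mem_filter.1 hi).1)).resolve_left (mem_filter.1 hi).2)
  have hsplit := sum_filter_add_sum_filter_not s (f · = c) f
  rw [sum_congr rfl (fun i hi => (mem_filter.1 hi).2), sum_congr rfl hneg, sum_const, sum_const,
    hsum, smul_neg, add_neg_eq_zero, nsmul_eq_mul, nsmul_eq_mul] at hsplit
  have hcard := CharP.natCast_injOn_Iio K p ((card_filter_le _ _).trans_lt hs)
    ((card_filter_le _ _).trans_lt hs) (mul_right_cancel₀ hc hsplit)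
  rw [← card_filter_add_card_filter_not (f · = c), hcard]
  exact ⟨_, rfl⟩

theorem even_card_of_sum_eq_zero_of_sum_pow_three_eq_zero {ε : K} (hε : ε ^ 2 = -1)
    (h2 : (2 : K) ≠ 0) (hs : #s < p) (hf : ∀ i ∈ s, f i ^ 4 = 1)
    (h1 : ∑ i ∈ s, f i = 0) (h3 : ∑ i ∈ s, f i ^ 3 = 0) : Even #s := by
  classical
  have hsq : ∀ i ∈ s, f i ^ 2 = 1 ∨ f i ^ 2 = -1 := fun i hi =>
    sq_eq_one_iff.1 (by rw [← pow_mul]; exact hf i hi)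
  have hP : 2 * ∑ i ∈ s with f i ^ 2 = 1, f i = 0 := calc
    _ = ∑ i ∈ s, (f i + f i ^ 3) := by
      rw [mul_sum, sum_filter]
      refine sum_congr rfl fun i hi => ?_
      split_ifs with h
      · linear_combination -f i * h
      · linear_combination -f i * (hsq i hi).resolve_left h
    _ = 0 := by rw [sum_add_distrib, h1, h3, add_zero]
  have hN : 2 * ∑ i ∈ s with ¬f i ^ 2 = 1, f i = 0 := calc
    _ = ∑ i ∈ s, (f i - f i ^ 3) := by
      rw [mul_sum, sum_filter]
      refine sum_congr rfl fun i hi => ?_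
      split_ifs with h
      · linear_combination f i * h
      · linear_combination f i * (hsq i hi).resolve_left h
    _ = 0 := by rw [sum_sub_distrib, h1, h3, sub_zero]
  have hε0 : ε ≠ 0 := by rintro rfl; simp at hε
  rw [← card_filter_add_card_filter_not (f · ^ 2 = 1)]
  refine (even_card_of_sum_eq_zero one_ne_zero ((card_filter_le _ _).trans_lt hs) (fun i hi => ?_)
    ((mul_eq_zero.1 hP).resolve_left h2)).add (even_card_of_sum_eq_zero hε0
      ((card_filter_le _ _).trans_lt hs) (fun i hi => ?_) ((mul_eq_zero.1 hN).resolve_left h2))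
  · rw [one_pow, (mem_filter.1 hi).2]
  · obtain ⟨his, hi1⟩ := mem_filter.1 hi
    rw [hε, (hsq i his).resolve_left hi1]

end Parity

theorem ne_zero_of_mapsTo_mul {K : Type*} [MulZeroClass K] {B C : Finset K}
    (hBC : Set.MapsTo (fun x : K × K => x.1 * x.2) (B ×ˢ C) {0}ᶜ) {b c : K} (hb : b ∈ B)
    (hc : c ∈ C) : b ≠ 0 := fun h => hBC (show (b, c) ∈ _ from ⟨hb, hc⟩) (by simp [h])

section FiniteField

variable {K : Type*} [Field K] [Fintype K] [DecidableEq K]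

theorem coe_univ_erase_zero : ((univ.erase 0 : Finset K) : Set K) = {0}ᶜ := by
  ext; simp

theorem card_mul_card_eq_of_bijOn_mul {B C : Finset K}
    (hBC : Set.BijOn (fun x : K × K => x.1 * x.2) (B ×ˢ C) {0}ᶜ) :
    #B * #C = Fintype.card K - 1 := by
  rw [← coe_univ_erase_zero, ← coe_product] at hBC
  rw [← card_product, card_nbij _ hBC.mapsTo hBC.injOn hBC.surjOn,
    card_erase_of_mem (mem_univ _), card_univ]

theorem bijOn_mul_of_injOn {B C : Finset K}
    (hmaps : Set.MapsTo (fun x : K × K => x.1 * x.2) (B ×ˢ C) {0}ᶜ)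
    (hinj : Set.InjOn (fun x : K × K => x.1 * x.2) (B ×ˢ C))
    (hcard : Fintype.card K - 1 ≤ #B * #C) :
    Set.BijOn (fun x : K × K => x.1 * x.2) (B ×ˢ C) {0}ᶜ := by
  rw [← coe_univ_erase_zero] at hmaps ⊢
  rw [← coe_product] at hmaps hinj ⊢
  refine ⟨hmaps, hinj, surjOn_of_injOn_of_card_le _ hmaps hinj ?_⟩
  rwa [card_product, card_erase_of_mem (mem_univ _), card_univ]

theorem sum_pow_mul_sum_pow_eq_zero {B C : Finset K}
    (hBC : Set.BijOn (fun x : K × K => x.1 * x.2) (B ×ˢ C) {0}ᶜ)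
    {t : ℕ} (ht : 0 < t) (htq : t < Fintype.card K - 1) :
    (∑ b ∈ B, b ^ t) * ∑ c ∈ C, c ^ t = 0 := by
  rw [← coe_univ_erase_zero, ← coe_product] at hBC
  rw [sum_mul_sum, ← sum_product']
  simp_rw [← mul_pow]
  rw [sum_nbij (g := (· ^ t)) _ (fun x hx => hBC.mapsTo hx) hBC.injOn hBC.surjOn (fun _ _ => rfl),
    sum_erase _ (zero_pow ht.ne'), FiniteField.sum_pow_lt_card_sub_one K t htq]

theorem bijOn_mul_filter_pow_eq_one {C : Finset K} {m : ℕ} (hm : m ≠ 0) (hC : 0 ∉ C)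
    (hinj : Set.InjOn (· ^ m) (C : Set K)) (hsurj : ∀ y ≠ 0, ∃ c ∈ C, c ^ m = y ^ m) :
    Set.BijOn (fun x : K × K => x.1 * x.2) (univ.filter (· ^ m = 1) ×ˢ C) {0}ᶜ := by
  have hC0 : ∀ c ∈ C, c ≠ 0 := fun c hc h => hC (h ▸ hc)
  refine ⟨?_, ?_, ?_⟩
  · rintro ⟨b, c⟩ ⟨hb, hc⟩
    simp only [coe_filter, mem_univ, true_and, Set.mem_ofPred_eq] at hb
    exact mul_ne_zero (by rintro rfl; simp [zero_pow hm] at hb) (hC0 c hc)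
  · rintro ⟨b, c⟩ ⟨hb, hc⟩ ⟨b', c'⟩ ⟨hb', hc'⟩ h
    simp only [coe_filter, mem_univ, true_and, Set.mem_ofPred_eq] at hb hb' h
    have hcc : c = c' := hinj hc hc' (by simpa [mul_pow, hb, hb'] using congrArg (· ^ m) h)
    subst hcc
    simpa using mul_right_cancel₀ (hC0 c hc) h
  · intro y hy
    obtain ⟨c, hc, hcy⟩ := hsurj y hy
    refine ⟨(y / c, c), ?_, div_mul_cancel₀ y (hC0 c hc)⟩
    simp [div_pow, hcy, pow_ne_zero m hy, hc]

end FiniteField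

theorem bStar_zero_four (q : ℕ) (b : ZMod q) :
    bStar 0 4 q b = ({1, 2, 3, 4} : Finset (ZMod q)).image (b * ·) := by
  rw [bStar, show (Icc (-((0 : ℕ) : ℤ)) ((4 : ℕ) : ℤ)).erase 0 = ({1, 2, 3, 4} : Finset ℤ) by
    decide]
  simp [image_insert]

namespace ZMod

variable {p : ℕ}

theorem one_two_three_four_eq_image :
    ({1, 2, 3, 4} : Finset (ZMod p)) = (Icc 1 4).image (Nat.cast : ℕ → ZMod p) := by
  rw [show Icc 1 4 = ({1, 2, 3, 4} : Finset ℕ) by decide]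
  simp [image_insert]

theorem injOn_natCast_Icc_one_four (hp : 4 < p) :
    Set.InjOn (Nat.cast : ℕ → ZMod p) (Icc 1 4 : Finset ℕ) :=
  (CharP.natCast_injOn_Iio _ p).mono fun k hk => by
    simp only [coe_Icc, Set.mem_Icc] at hk
    exact Set.mem_Iio.2 (by omega)

theorem card_one_two_three_four (hp : 4 < p) : #({1, 2, 3, 4} : Finset (ZMod p)) = 4 := by
  rw [one_two_three_four_eq_image, card_image_of_injOn (injOn_natCast_Icc_one_four hp)]
  rfl

theorem zero_notMem_one_two_three_four (hp : 4 < p) :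
    (0 : ZMod p) ∉ ({1, 2, 3, 4} : Finset (ZMod p)) := by
  rw [one_two_three_four_eq_image]
  simp only [mem_image, mem_Icc, not_exists, not_and]
  rintro k ⟨hk1, hk4⟩ h
  have := CharP.natCast_injOn_Iio (ZMod p) p (show k < p by omega) (show 0 < p by omega)
    (by simpa using h)
  omega

theorem sum_one_two_three_four (hp : 4 < p) (g : ZMod p → ZMod p) :
    ∑ c ∈ ({1, 2, 3, 4} : Finset (ZMod p)), g c = g 1 + g 2 + g 3 + g 4 := by
  rw [one_two_three_four_eq_image, sum_image (injOn_natCast_Icc_one_four hp),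
    show Icc 1 4 = ({1, 2, 3, 4} : Finset ℕ) by decide]
  simp [add_assoc]

end ZMod

theorem isPerfectSplitter_zero_four_iff {p : ℕ} [Fact p.Prime] (hp : 4 < p) {B : Finset (ZMod p)} :
    IsPerfectSplitter 0 4 p B ↔ Set.BijOn (fun x : ZMod p × ZMod p => x.1 * x.2)
      (B ×ˢ ({1, 2, 3, 4} : Finset (ZMod p))) {0}ᶜ := by
  have hC0 := ZMod.zero_notMem_one_two_three_four hp
  have hC4 := ZMod.card_one_two_three_four hp
  have hcard : Fintype.card (ZMod p) - 1 = p - 1 := by rw [ZMod.card]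
  constructor
  · rintro ⟨⟨hcard4, hdisj⟩, hB⟩
    have hB0 : ∀ b ∈ B, b ≠ 0 := by
      rintro b hb rfl
      simpa [bStar_zero_four] using hcard4 0 hb
    refine bijOn_mul_of_injOn ?_ ?_ (by rw [hC4, hcard]; omega)
    · rintro ⟨b, c⟩ ⟨hb, hc⟩
      exact mul_ne_zero (hB0 b hb) fun h => hC0 (h ▸ hc)
    · rintro ⟨b, c⟩ ⟨hb, hc⟩ ⟨b', c'⟩ ⟨hb', hc'⟩ h
      obtain rfl | hbb := eq_or_ne b b'
      · simpa using mul_left_cancel₀ (hB0 b hb) h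
      · refine absurd (hdisj hb hb' hbb) (not_disjoint_iff.2 ⟨b * c, ?_, ?_⟩)
        · exact bStar_zero_four p b ▸ mem_image_of_mem _ hc
        · rw [bStar_zero_four, show b * c = b' * c' from h]
          exact mem_image_of_mem _ hc'
  · intro hBC
    have hB0 : ∀ b ∈ B, b ≠ 0 := fun b hb =>
      ne_zero_of_mapsTo_mul hBC.mapsTo hb (by simp : (1 : ZMod p) ∈ _)
    refine ⟨⟨fun b hb => ?_, fun b hb b' hb' hbb => ?_⟩, ?_⟩
    · rw [bStar_zero_four, card_image_of_injective _ (mul_right_injective₀ (hB0 b hb)), hC4]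
    · show Disjoint _ _
      rw [bStar_zero_four, bStar_zero_four, disjoint_left]
      rintro _ hy hy'
      obtain ⟨c, hc, rfl⟩ := mem_image.1 hy
      obtain ⟨c', hc', h⟩ := mem_image.1 hy'
      exact hbb (congrArg Prod.fst (hBC.injOn (show (b, c) ∈ _ from ⟨hb, hc⟩)
        (show (b', c') ∈ _ from ⟨hb', hc'⟩) h.symm))
    · have := card_mul_card_eq_of_bijOn_mul hBC
      rw [hC4, hcard] at this
      omega

namespace ZMod

variable {p : ℕ} [Fact p.Prime] {m : ℕ}

theorem pow_pow_four_eq_one (hm : 4 * m = p - 1) {y : ZMod p} (hy : y ≠ 0) : (y ^ m) ^ 4 = 1 := by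
  rw [← pow_mul, mul_comm, hm, pow_card_sub_one_eq_one hy]

theorem two_ne_zero_of_mod_eight (hp : p % 8 = 5) : (2 : ZMod p) ≠ 0 :=
  Ring.two_ne_zero (by rw [ringChar_zmod_n]; omega)

theorem two_pow_sq_eq_neg_one (hp : p % 8 = 5) (hm : 4 * m = p - 1) :
    ((2 : ZMod p) ^ m) ^ 2 = -1 := by
  have h2 := two_ne_zero_of_mod_eight hp
  have hns : ¬IsSquare (2 : ZMod p) := by rw [exists_sq_eq_two_iff (by omega)]; omega
  rw [← pow_mul, show m * 2 = p / 2 by omega]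
  exact (pow_div_two_eq_neg_one_or_one p h2).resolve_left (mt (euler_criterion p h2).2 hns)

theorem exists_pow_four_eq_iff (hp : p % 8 = 5) (hm : 4 * m = p - 1) {a : ZMod p} :
    (∃ x : ZMod p, x ≠ 0 ∧ x ^ 4 = a) ↔ a ^ m = 1 := by
  constructor
  · rintro ⟨x, hx, rfl⟩
    rw [← pow_mul, mul_comm, pow_mul]
    exact pow_pow_four_eq_one hm hx
  · intro ha
    obtain ⟨x, rfl⟩ := exists_pow_four_eq_of_pow_eq_one (by rw [Nat.odd_iff]; omega) ha
    refine ⟨x, fun hx => ?_, rfl⟩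
    simp [hx, show m ≠ 0 by omega] at ha

theorem six_pow_eq_one_iff (hp : p % 8 = 5) (hm : 4 * m = p - 1) :
    (6 : ZMod p) ^ m = 1 ↔ (3 : ZMod p) ^ m = -2 ^ m := by
  have hε := two_pow_sq_eq_neg_one hp hm
  rw [show (6 : ZMod p) = 2 * 3 by norm_num, mul_pow]
  constructor <;> intro h
  · linear_combination (-(2 : ZMod p) ^ m) * h + 3 ^ m * hε
  · linear_combination (2 : ZMod p) ^ m * h - hε

theorem sum_pow_pow_mul_eq_zero_of_bijOn_mul (hp : 4 < p) (hm : 4 * m = p - 1)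
    {B : Finset (ZMod p)} (hB : Set.BijOn (fun x : ZMod p × ZMod p => x.1 * x.2)
      (B ×ˢ ({1, 2, 3, 4} : Finset (ZMod p))) {0}ᶜ) {k : ℕ} (hk0 : 0 < k) (hk4 : k < 4) :
    (∑ b ∈ B, (b ^ m) ^ k) * (1 + (2 ^ m) ^ k + (3 ^ m) ^ k + (4 ^ m) ^ k) = 0 := by
  have := sum_pow_mul_sum_pow_eq_zero hB (t := m * k) (Nat.mul_pos (by omega) hk0)
    (by rw [ZMod.card]; interval_cases k <;> omega)
  simpa only [sum_one_two_three_four hp, pow_mul, one_pow] using this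

theorem three_pow_eq_neg_two_pow_of_bijOn_mul (hp : p % 8 = 5) (hm : 4 * m = p - 1)
    {B : Finset (ZMod p)} (hB : Set.BijOn (fun x : ZMod p × ZMod p => x.1 * x.2)
      (B ×ˢ ({1, 2, 3, 4} : Finset (ZMod p))) {0}ᶜ) :
    (3 : ZMod p) ^ m = -2 ^ m := by
  have hp4 : 4 < p := by omega
  have h2 := two_ne_zero_of_mod_eight hp
  have hBm : #B * 4 = p - 1 := by
    rw [← card_one_two_three_four hp4, card_mul_card_eq_of_bijOn_mul hB, ZMod.card]
  have hodd : ¬Even #B := by rw [Nat.not_even_iff_odd, Nat.odd_iff]; omega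
  have hχ : ∀ b ∈ B, (b ^ m) ^ 4 = 1 := fun b hb =>
    pow_pow_four_eq_one hm (ne_zero_of_mapsTo_mul hB.mapsTo hb (by simp : (1 : ZMod p) ∈ _))
  have hsum : ∀ k, 0 < k → k < 4 → 1 + (2 ^ m) ^ k + (3 ^ m) ^ k + (4 ^ m) ^ k ≠ (0 : ZMod p) →
      ∑ b ∈ B, (b ^ m) ^ k = 0 := fun k hk0 hk4 hU =>
    (mul_eq_zero.1 (sum_pow_pow_mul_eq_zero_of_bijOn_mul hp4 hm hB hk0 hk4)).resolve_right hU
  have h3 : (3 : ZMod p) ≠ 0 := fun h => zero_notMem_one_two_three_four hp4 (h ▸ by simp)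
  have h4 : (4 : ZMod p) ^ m = -1 := by
    rw [show (4 : ZMod p) = 2 ^ 2 by norm_num, ← pow_mul, mul_comm, pow_mul,
      two_pow_sq_eq_neg_one hp hm]
  set ε := (2 : ZMod p) ^ m
  set δ := (3 : ZMod p) ^ m
  have hε : ε ^ 2 = -1 := two_pow_sq_eq_neg_one hp hm
  have hε0 : ε ≠ 0 := pow_ne_zero m h2
  have hδ4 : δ ^ 4 = 1 := pow_pow_four_eq_one hm h3
  have hδ : δ ^ 2 = 1 ∨ δ = ε ∨ δ = -ε := by
    rcases eq_one_or_eq_neg_one_or_eq_or_eq_neg_of_pow_four_eq_one hε hδ4 with h | h | h | h <;>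
      simp [h]
  rcases hδ with hδ | hδ | hδ
  · refine absurd (even_card_of_sum_eq_zero one_ne_zero (by omega) (f := fun b => (b ^ m) ^ 2)
      (fun b hb => by rw [one_pow, ← pow_mul]; exact hχ b hb)
      (hsum 2 (by norm_num) (by norm_num) ?_)) hodd
    rw [hδ, hε, h4]
    norm_num [h2]
  · refine absurd (even_card_of_sum_eq_zero_of_sum_pow_three_eq_zero hε h2 (by omega) hχ ?_ ?_) hodd
    · simpa using hsum 1 (by norm_num) (by norm_num) (by
        rw [hδ, h4, show 1 + ε ^ 1 + ε ^ 1 + (-1) ^ 1 = 2 * ε by ring]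
        exact mul_ne_zero h2 hε0)
    · exact hsum 3 (by norm_num) (by norm_num) (by
        rw [hδ, h4, show 1 + ε ^ 3 + ε ^ 3 + (-1) ^ 3 = -(2 * ε) by
          linear_combination 2 * ε * hε]
        exact neg_ne_zero.2 (mul_ne_zero h2 hε0))
  · exact hδ

theorem exists_bijOn_mul_of_three_pow_eq_neg_two_pow (hp : p % 8 = 5) (hm : 4 * m = p - 1)
    (h3 : (3 : ZMod p) ^ m = -2 ^ m) :
    ∃ B : Finset (ZMod p), Set.BijOn (fun x : ZMod p × ZMod p => x.1 * x.2)
      (B ×ˢ ({1, 2, 3, 4} : Finset (ZMod p))) {0}ᶜ := by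
  have hp4 : 4 < p := by omega
  have hε := two_pow_sq_eq_neg_one hp hm
  have h4 : (4 : ZMod p) ^ m = -1 := by
    rw [show (4 : ZMod p) = 2 ^ 2 by norm_num, ← pow_mul, mul_comm, pow_mul, hε]
  have himage : ({1, 2, 3, 4} : Finset (ZMod p)).image (· ^ m) = {1, 2 ^ m, -2 ^ m, -1} := by
    simp [image_insert, h3, h4]
  refine ⟨_, bijOn_mul_filter_pow_eq_one (show m ≠ 0 by omega)
    (zero_notMem_one_two_three_four hp4) ?_ ?_⟩
  · refine card_image_iff.1 ?_
    rw [himage, card_fourth_roots_of_sq_eq_neg_one hε (two_ne_zero_of_mod_eight hp),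
      card_one_two_three_four hp4]
  · intro y hy
    have : y ^ m ∈ ({1, 2, 3, 4} : Finset (ZMod p)).image (· ^ m) := by
      rw [himage]
      rcases eq_one_or_eq_neg_one_or_eq_or_eq_neg_of_pow_four_eq_one hε
        (pow_pow_four_eq_one hm hy) with h | h | h | h <;> simp [h]
    exact mem_image.1 this

end ZMod

theorem stmt_9 (p : ℕ) (hp : p.Prime) (hmod : p % 8 = 5) :
    (∃ B : Finset (ZMod p), IsPerfectSplitter 0 4 p B ∧
        Nat.Coprime p (Nat.factorial 4)) ↔
      (∃ x : ZMod p, x ≠ 0 ∧ x ^ 4 = 6) := by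
  have : Fact p.Prime := ⟨hp⟩
  have hp4 : 4 < p := by omega
  obtain ⟨m, hm⟩ : ∃ m, 4 * m = p - 1 := ⟨p / 4, by omega⟩
  rw [ZMod.exists_pow_four_eq_iff hmod hm, ZMod.six_pow_eq_one_iff hmod hm]
  constructor
  · rintro ⟨B, hB, -⟩
    exact ZMod.three_pow_eq_neg_two_pow_of_bijOn_mul hmod hm
      ((isPerfectSplitter_zero_four_iff hp4).1 hB)
  · intro h
    obtain ⟨B, hB⟩ := ZMod.exists_bijOn_mul_of_three_pow_eq_neg_two_pow hmod hm h
    exact ⟨B, (isPerfectSplitter_zero_four_iff hp4).2 hB,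
      (Nat.Prime.coprime_iff_not_dvd hp).2 (by rw [hp.dvd_factorial]; omega)⟩
end

section
/- Let k, m be positive integers with gcd(m, k!) = 1, and let a ≡ (-k)^{-1} (mod m) with 0 ≤ a < m. Then B = {ik + 1 : i ∈ [0, m-1], i ≠ a} is a quasi-perfect B[0,k](km) splitter set; that is, B is a B[0,k](km) set of size m - 1 = ⌊(km-1)/k⌋. -/
/-!
Write `b = ik + 1`. Reducing `(ik + 1) j ≡ (i'k + 1) j' (mod km)` modulo `k` gives
`j ≡ j' (mod k)`, hence `j = j'` for `j, j' ∈ [1, k]`. Cancelling `k` and then `j`, which is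
coprime to `m` because it divides `k!`, leaves `i ≡ i' (mod m)`, hence `i = i'`. So all the
products `b j` are distinct.
-/

open Finset

lemma bStar_zero_eq_image_Icc (k q : ℕ) (b : ZMod q) :
    bStar 0 k q b = (Icc 1 k).image fun j : ℕ => b * (j : ZMod q) := by
  ext x
  simp only [bStar, mem_image, mem_erase, mem_Icc, CharP.cast_eq_zero, neg_zero]
  constructor
  · rintro ⟨j, ⟨hj0, hj0', hjk⟩, rfl⟩
    exact ⟨j.toNat, by omega, by rw [← Int.cast_natCast, Int.toNat_of_nonneg hj0']⟩
  · rintro ⟨j, hj, rfl⟩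
    exact ⟨j, by omega, by simp⟩

lemma card_bStar_zero_of_injOn {k q : ℕ} {b : ZMod q}
    (h : Set.InjOn (fun j : ℕ => b * (j : ZMod q)) (Icc 1 k)) :
    (bStar 0 k q b).card = k := by
  rw [bStar_zero_eq_image_Icc, card_image_of_injOn h, Nat.card_Icc, Nat.add_sub_cancel]

lemma isSplitter_image_of_injOn {ι : Type*} {k q : ℕ} {s : Finset ι} {f : ι → ZMod q}
    (h : ∀ i ∈ s, ∀ i' ∈ s, ∀ j ∈ Icc 1 k, ∀ j' ∈ Icc 1 k,
      f i * (j : ZMod q) = f i' * j' → i = i' ∧ j = j') :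
    IsSplitter 0 k q (s.image f) := by
  refine ⟨?_, ?_⟩
  · simp only [mem_image, forall_exists_index, and_imp, forall_apply_eq_imp_iff₂, zero_add]
    exact fun i hi => card_bStar_zero_of_injOn fun j hj j' hj' hjj' =>
      (h i hi i hi j hj j' hj' hjj').2
  · simp only [coe_image, Set.Pairwise, Set.mem_image, mem_coe, ne_eq, forall_exists_index,
      and_imp, forall_apply_eq_imp_iff₂]
    intro i hi i' hi' hne
    rw [bStar_zero_eq_image_Icc, bStar_zero_eq_image_Icc, disjoint_left]
    intro x hx hx'
    obtain ⟨j, hj, rfl⟩ := mem_image.1 hx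
    obtain ⟨j', hj', hjj'⟩ := mem_image.1 hx'
    exact hne (congrArg f (h i hi i' hi' j hj j' hj' hjj'.symm).1)

namespace Nat

lemma eq_of_modEq_of_mem_Icc {k j j' : ℕ} (h : j ≡ j' [MOD k]) (hj : j ∈ Icc 1 k)
    (hj' : j' ∈ Icc 1 k) : j = j' := by
  rw [mem_Icc] at hj hj'
  have hlt : j - 1 ≡ j' - 1 [MOD k] := by
    refine ModEq.add_right_cancel' 1 ?_
    rwa [Nat.sub_add_cancel hj.1, Nat.sub_add_cancel hj'.1]
  have := hlt.eq_of_lt_of_lt (by omega) (by omega)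
  omega

lemma eq_of_mul_add_one_mul_modEq_left {k m i i' j j' : ℕ}
    (h : (i * k + 1) * j ≡ (i' * k + 1) * j' [MOD k * m]) (hj : j ∈ Icc 1 k)
    (hj' : j' ∈ Icc 1 k) : j = j' := by
  refine eq_of_modEq_of_mem_Icc ?_ hj hj'
  have hk : j + k * (i * j) ≡ j' + k * (i' * j') [MOD k] := by
    convert ModEq.of_mul_right m h using 1 <;> ring
  simpa only [ModEq, add_mul_mod_self_left] using hk

lemma eq_of_mul_add_one_mul_modEq_right {k m i i' j : ℕ} (hk : k ≠ 0) (hmj : m.Coprime j)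
    (h : (i * k + 1) * j ≡ (i' * k + 1) * j [MOD k * m]) (hi : i < m) (hi' : i' < m) :
    i = i' := by
  have hkij : k * (i * j) ≡ k * (i' * j) [MOD k * m] := by
    refine ModEq.add_right_cancel' j ?_
    convert h using 1 <;> ring
  exact ((ModEq.mul_left_cancel' hk hkij).cancel_right_of_coprime hmj).eq_of_lt_of_lt hi hi'

end Nat

lemma eq_and_eq_of_natCast_mul_add_one_mul_eq {k m i i' j j' : ℕ} (hk : k ≠ 0)
    (hco : m.Coprime k.factorial) (hi : i < m) (hi' : i' < m) (hj : j ∈ Icc 1 k)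
    (hj' : j' ∈ Icc 1 k)
    (h : ((i * k + 1 : ℕ) : ZMod (k * m)) * (j : ZMod (k * m)) =
      ((i' * k + 1 : ℕ) : ZMod (k * m)) * j') :
    i = i' ∧ j = j' := by
  rw [← Nat.cast_mul, ← Nat.cast_mul, ZMod.natCast_eq_natCast_iff] at h
  obtain rfl := Nat.eq_of_mul_add_one_mul_modEq_left h hj hj'
  have hmj : m.Coprime j :=
    hco.coprime_dvd_right (Nat.dvd_factorial (mem_Icc.1 hj).1 (mem_Icc.1 hj).2)
  exact ⟨Nat.eq_of_mul_add_one_mul_modEq_right hk hmj h hi hi', rfl⟩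

theorem stmt_11_general (k m a : ℕ) (hk : 0 < k)
    (hco : Nat.Coprime m (Nat.factorial k)) (ha : a < m) :
    IsSplitter 0 k (k * m)
        (((Finset.range m).erase a).image
          (fun i => ((i * k + 1 : ℕ) : ZMod (k * m)))) ∧
      (((Finset.range m).erase a).image
          (fun i => ((i * k + 1 : ℕ) : ZMod (k * m)))).card = m - 1 := by
  have key : ∀ i ∈ (range m).erase a, ∀ i' ∈ (range m).erase a,
      ∀ j ∈ Icc 1 k, ∀ j' ∈ Icc 1 k,
        ((i * k + 1 : ℕ) : ZMod (k * m)) * (j : ZMod (k * m)) =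
          ((i' * k + 1 : ℕ) : ZMod (k * m)) * j' → i = i' ∧ j = j' :=
    fun i hi i' hi' j hj j' hj' => eq_and_eq_of_natCast_mul_add_one_mul_eq hk.ne' hco
      (mem_range.1 (mem_of_mem_erase hi)) (mem_range.1 (mem_of_mem_erase hi')) hj hj'
  have hone : 1 ∈ Icc 1 k := mem_Icc.2 ⟨le_rfl, hk⟩
  refine ⟨isSplitter_image_of_injOn key, ?_⟩
  have hinj : Set.InjOn (fun i => ((i * k + 1 : ℕ) : ZMod (k * m))) ((range m).erase a) :=
    fun i hi i' hi' h => (key i hi i' hi' 1 hone 1 hone (by simpa using h)).1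
  rw [card_image_of_injOn hinj, card_erase_of_mem (mem_range.2 ha), card_range]

theorem stmt_11 (k m a : ℕ) (hk : 0 < k) (hm : 0 < m)
    (hco : Nat.Coprime m (Nat.factorial k)) (ha : a < m)
    (hainv : (a * k + 1) % m = 0) :
    IsSplitter 0 k (k * m)
        (((Finset.range m).erase a).image
          (fun i => ((i * k + 1 : ℕ) : ZMod (k * m)))) ∧
      (((Finset.range m).erase a).image
          (fun i => ((i * k + 1 : ℕ) : ZMod (k * m)))).card = m - 1 :=
  stmt_11_general k m a hk hco ha
end

section
/- Let k > 0 be an integer and p a prime with k < p < (4k-1)/3. Then B = {k+1} ∪ {1 + (2k+2)i : i ∈ [0, p-1]} is a quasi-perfect B[-(k-1),k](p(2k+2)) splitter set; that is, B is a B[-(k-1),k](p(2k+2)) set of size p+1 = ⌊(p(2k+2)-1)/(2k-1)⌋. -/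
/-
Write `m = 2k+2` and `q = pm`, and let `j, j'` be nonzero multipliers in `[-(k-1), k]`.
If `(1+mi)j ≡ (1+mi')j' (mod q)`, reducing mod `m` gives `j ≡ j'`, hence `j = j'` as
`|j-j'| < m`; then `p ∣ (i-i')j`, which forces `i = i'` because the prime `p` exceeds both
`|i-i'|` and `|j|`. Since `k+1 ∣ m`, a congruence `(k+1)j ≡ (1+mi)j' (mod q)` would give
`k+1 ∣ j'`, which is impossible, and `(k+1)j ≡ (k+1)j' (mod q)` gives `j ≡ j' (mod 2p)`, hence
`j = j'` as `|j-j'| < 2k < 2p`. Taking `j = j' = 1` shows that the `p+1` listed elements are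
distinct.
-/

open Finset

theorem Int.ModEq.eq_of_abs_lt {a b m : ℤ} (h : a ≡ b [ZMOD m]) (h2 : |b - a| < m) : a = b :=
  (sub_eq_zero.mp (Int.eq_zero_of_abs_lt_dvd h.dvd h2)).symm

theorem eq_and_eq_of_one_add_mul_mul_modEq {m p i i' j j' : ℤ} (hp : Prime p)
    (hi : |i' - i| < p) (hj : j ≠ 0) (hjp : |j| < p) (hjj : |j' - j| < m)
    (h : (1 + m * i) * j ≡ (1 + m * i') * j' [ZMOD p * m]) : i = i' ∧ j = j' := by
  have hm : m ≠ 0 := (lt_of_le_of_lt (abs_nonneg _) hjj).ne'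
  have hmod : ∀ c x, x ≡ (1 + m * c) * x [ZMOD m] := fun c x =>
    Int.modEq_iff_dvd.mpr ⟨c * x, by ring⟩
  obtain rfl : j = j' := by
    refine Int.ModEq.eq_of_abs_lt ?_ hjj
    exact ((hmod i j).trans (h.of_mul_left p)).trans (hmod i' j').symm
  refine ⟨?_, rfl⟩
  have hpm : m * p ∣ m * ((i' - i) * j) := by
    rw [mul_comm m p, show m * ((i' - i) * j) = (1 + m * i') * j - (1 + m * i) * j by ring]
    exact Int.modEq_iff_dvd.mp h
  rcases hp.dvd_or_dvd (Int.dvd_of_mul_dvd_mul_left hm hpm) with hdi | hdj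
  · exact (sub_eq_zero.mp (Int.eq_zero_of_abs_lt_dvd hdi hi)).symm
  · exact absurd (Int.eq_zero_of_abs_lt_dvd hdj hjp) hj

theorem eq_zero_of_mul_modEq_mul {n q a b j j' : ℤ} (hnq : n ∣ q) (hb : n ∣ b)
    (ha : a ≡ 1 [ZMOD n]) (hj' : |j'| < n) (h : b * j ≡ a * j' [ZMOD q]) : j' = 0 := by
  have : j' ≡ 0 [ZMOD n] := calc
    j' = 1 * j' := (one_mul j').symm
    _ ≡ a * j' [ZMOD n] := (ha.mul_right j').symm
    _ ≡ b * j [ZMOD n] := (h.of_dvd hnq).symm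
    _ ≡ 0 [ZMOD n] := Int.modEq_zero_iff_dvd.mpr (dvd_mul_of_dvd_left hb j)
  exact Int.eq_zero_of_abs_lt_dvd (Int.modEq_zero_iff_dvd.mp this) hj'

noncomputable def multipliers (k1 k2 : ℕ) : Finset ℤ :=
  (Icc (-(k1 : ℤ)) k2).erase 0

theorem mem_multipliers {k1 k2 : ℕ} {j : ℤ} :
    j ∈ multipliers k1 k2 ↔ j ≠ 0 ∧ -(k1 : ℤ) ≤ j ∧ j ≤ k2 := by
  simp [multipliers]

theorem card_multipliers (k1 k2 : ℕ) : (multipliers k1 k2).card = k1 + k2 := by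
  rw [multipliers, card_erase_of_mem (by simp), Int.card_Icc]
  omega

theorem bStar_eq_image (k1 k2 q : ℕ) (b : ZMod q) :
    bStar k1 k2 q b = (multipliers k1 k2).image fun j : ℤ => b * (j : ZMod q) :=
  rfl

theorem isSplitter_of_injOn {k1 k2 q : ℕ} {B : Finset (ZMod q)}
    (h : Set.InjOn (fun x : ZMod q × ℤ => x.1 * x.2) (B ×ˢ (multipliers k1 k2 : Set ℤ))) :
    IsSplitter k1 k2 q B := by
  refine ⟨fun b hb => ?_, fun b hb b' hb' hne => ?_⟩
  · rw [bStar_eq_image, card_image_of_injOn, card_multipliers]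
    intro j hj j' hj' e
    exact congrArg Prod.snd (h (Set.mk_mem_prod hb hj) (Set.mk_mem_prod hb hj') e)
  · change Disjoint (bStar k1 k2 q b) (bStar k1 k2 q b')
    rw [bStar_eq_image, bStar_eq_image, disjoint_left]
    simp only [mem_image, not_exists, not_and]
    rintro _ ⟨j, hj, rfl⟩ j' hj' e
    exact hne (congrArg Prod.fst (h (Set.mk_mem_prod hb' hj') (Set.mk_mem_prod hb hj) e)).symm

theorem natCast_mul_intCast_eq_iff {q a a' : ℕ} {j j' : ℤ} :
    (a : ZMod q) * j = (a' : ZMod q) * j' ↔ (a : ℤ) * j ≡ a' * j' [ZMOD q] := by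
  rw [← ZMod.intCast_eq_intCast_iff]
  push_cast
  rfl

section

variable {k p : ℕ} {j j' : ℤ}

theorem abs_sub_lt_of_mem_multipliers (hj : j ∈ multipliers (k - 1) k)
    (hj' : j' ∈ multipliers (k - 1) k) : |j' - j| < 2 * k := by
  rw [mem_multipliers] at hj hj'
  exact abs_sub_lt_iff.mpr ⟨by omega, by omega⟩

theorem abs_lt_of_mem_multipliers (hj : j ∈ multipliers (k - 1) k) : |j| < k + 1 := by
  rw [mem_multipliers] at hj
  exact abs_lt.mpr ⟨by omega, by omega⟩

theorem eq_and_eq_of_progression_mul_eq (hp : p.Prime) (hkp : k < p) {i i' : ℕ}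
    (hi : i < p) (hi' : i' < p) (hj : j ∈ multipliers (k - 1) k)
    (hj' : j' ∈ multipliers (k - 1) k)
    (h : ((1 + (2 * k + 2) * i : ℕ) : ZMod (p * (2 * k + 2))) * j =
      ((1 + (2 * k + 2) * i' : ℕ) : ZMod (p * (2 * k + 2))) * j') :
    i = i' ∧ j = j' := by
  rw [natCast_mul_intCast_eq_iff] at h
  push_cast at h
  have := eq_and_eq_of_one_add_mul_mul_modEq (Nat.prime_iff_prime_int.mp hp)
    (abs_sub_lt_iff.mpr ⟨by omega, by omega⟩) (mem_multipliers.mp hj).1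
    ((abs_lt_of_mem_multipliers hj).trans_le (by exact_mod_cast hkp))
    ((abs_sub_lt_of_mem_multipliers hj hj').trans (by omega)) h
  exact_mod_cast this

theorem center_mul_ne_progression_mul {i : ℕ} (hj' : j' ∈ multipliers (k - 1) k) :
    ((k + 1 : ℕ) : ZMod (p * (2 * k + 2))) * j ≠
      ((1 + (2 * k + 2) * i : ℕ) : ZMod (p * (2 * k + 2))) * j' := by
  rw [Ne, natCast_mul_intCast_eq_iff]
  push_cast
  intro h
  refine (mem_multipliers.mp hj').1 (eq_zero_of_mul_modEq_mul ⟨2 * p, by ring⟩ dvd_rfl ?_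
    (abs_lt_of_mem_multipliers hj') h)
  exact Int.modEq_iff_dvd.mpr ⟨-2 * i, by ring⟩

theorem eq_of_center_mul_eq (hkp : k < p) (hj : j ∈ multipliers (k - 1) k)
    (hj' : j' ∈ multipliers (k - 1) k)
    (h : ((k + 1 : ℕ) : ZMod (p * (2 * k + 2))) * j =
      ((k + 1 : ℕ) : ZMod (p * (2 * k + 2))) * j') :
    j = j' := by
  rw [natCast_mul_intCast_eq_iff] at h
  push_cast at h
  rw [show ((p : ℤ) * (2 * k + 2)) = (k + 1) * (2 * p) by ring] at h
  exact (h.mul_left_cancel' (by positivity)).eq_of_abs_lt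
    ((abs_sub_lt_of_mem_multipliers hj hj').trans (by omega))

end

theorem stmt_13_general (k p : ℕ) (hk : 0 < k) (hp : p.Prime) (h1 : k < p) :
    IsSplitter (k - 1) k (p * (2 * k + 2))
        (insert ((k + 1 : ℕ) : ZMod (p * (2 * k + 2)))
          ((Finset.range p).image
            (fun i => ((1 + (2 * k + 2) * i : ℕ) : ZMod (p * (2 * k + 2)))))) ∧
      (insert ((k + 1 : ℕ) : ZMod (p * (2 * k + 2)))
          ((Finset.range p).image
            (fun i => ((1 + (2 * k + 2) * i : ℕ) : ZMod (p * (2 * k + 2)))))).card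
        = p + 1 := by
  have one_mem : (1 : ℤ) ∈ multipliers (k - 1) k :=
    mem_multipliers.mpr ⟨one_ne_zero, by omega, by omega⟩
  refine ⟨isSplitter_of_injOn ?_, ?_⟩
  · rintro ⟨b, j⟩ ⟨hb, hj⟩ ⟨b', j'⟩ ⟨hb', hj'⟩ (e : b * j = b' * j')
    simp only [coe_insert, coe_image, coe_range, Set.mem_insert_iff, Set.mem_image,
      Set.mem_Iio] at hb hb'
    simp only [mem_coe] at hj hj'
    rcases hb with rfl | ⟨i, hi, rfl⟩ <;> rcases hb' with rfl | ⟨i', hi', rfl⟩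
    · rw [eq_of_center_mul_eq h1 hj hj' e]
    · exact absurd e (center_mul_ne_progression_mul hj')
    · exact absurd e.symm (center_mul_ne_progression_mul hj)
    · obtain ⟨rfl, rfl⟩ := eq_and_eq_of_progression_mul_eq hp h1 hi hi' hj hj' e
      rfl
  · rw [card_insert_of_notMem, card_image_of_injOn, card_range]
    · intro i hi i' hi' e
      refine (eq_and_eq_of_progression_mul_eq hp h1 (mem_range.mp hi) (mem_range.mp hi')
        one_mem one_mem ?_).1
      simpa using e
    · simp only [mem_image, mem_range, not_exists, not_and]
      intro i _ e
      exact center_mul_ne_progression_mul (p := p) (j := 1) one_mem (by simpa using e.symm)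

theorem stmt_13 (k p : ℕ) (hk : 0 < k) (hp : p.Prime) (h1 : k < p)
    (h2 : 3 * p < 4 * k - 1) :
    IsSplitter (k - 1) k (p * (2 * k + 2))
        (insert ((k + 1 : ℕ) : ZMod (p * (2 * k + 2)))
          ((Finset.range p).image
            (fun i => ((1 + (2 * k + 2) * i : ℕ) : ZMod (p * (2 * k + 2)))))) ∧
      (insert ((k + 1 : ℕ) : ZMod (p * (2 * k + 2)))
          ((Finset.range p).image
            (fun i => ((1 + (2 * k + 2) * i : ℕ) : ZMod (p * (2 * k + 2)))))).card
        = p + 1 :=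
  stmt_13_general k p hk hp h1
end

section
/- Let k be an even positive integer, m ≥ 1, and p = 2^m·k·n + 1 a prime for some n ≥ 1. Let g be an odd primitive root modulo p and set v = 2^{m-1}·k. For i = 0,1, let N_i = {ind_g(x) mod v : x ∈ [1,k], x ≡ i (mod 2)}. Suppose there exists a 2^m-element subset A ⊆ Z_v such that Z_v = A + N_i is a factorization (every element of Z_v is uniquely a sum a + t with a ∈ A, t ∈ N_i) for both i = 0 and i = 1. Then the set {g^{a+jv} mod 2p : a ∈ A, j ∈ [0, n-1]} is a quasi-perfect B[-k,k](2p) splitter set of size 2^m·n. -/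
/-!
Reduce modulo `2` and modulo `p`. If `g^e s = g^e' t` in `ℤ/2p` with `s, t ∈ [-k,k]*`, then
`s ≡ t (mod 2)` because `g` is odd, and squaring away the signs `±1 = g^0, g^((p-1)/2)` gives
`e + ind|s| ≡ e' + ind|t|` modulo `(p-1)/2 = v n`. For `e = a + j v`, read modulo `v`, this is
an equality `a + ind|s| = a' + ind|t|` in `A + N_i` with `i` the common parity of `|s|` and `|t|`,
so the factorization forces `a = a'` and `|s| = |t|`, after which the congruence modulo `v n`
forces `j = j'`. This gives the disjointness, and with `s = t = 1` the injectivity of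
`(a, j) ↦ g^(a + j v)`.
-/

open Finset

theorem card_bStar_of_isUnit {k1 k2 q : ℕ} {b : ZMod q} (hb : IsUnit b) (hq : k1 + k2 < q) :
    (bStar k1 k2 q b).card = k1 + k2 := by
  have hinj : Set.InjOn (fun j : ℤ => b * (j : ZMod q)) ((Icc (-(k1 : ℤ)) k2).erase 0) := by
    intro s hs t ht hst
    simp only [coe_erase, Set.mem_sdiff, mem_coe, mem_Icc] at hs ht
    have hdvd : (q : ℤ) ∣ t - s :=
      (ZMod.intCast_eq_intCast_iff_dvd_sub s t q).1 (hb.mul_left_cancel hst)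
    have := Int.eq_zero_of_abs_lt_dvd hdvd (by rw [abs_lt]; omega)
    omega
  rw [bStar, card_image_of_injOn hinj, card_erase_of_mem (by simp), Int.card_Icc]
  omega

theorem isSplitter_image {ι : Type*} {k1 k2 q : ℕ} {S : Finset ι} {f : ι → ZMod q}
    (hq : k1 + k2 < q) (hf : ∀ i ∈ S, IsUnit (f i))
    (hcancel : ∀ i ∈ S, ∀ i' ∈ S, ∀ s ∈ (Icc (-(k1 : ℤ)) k2).erase 0,
      ∀ t ∈ (Icc (-(k1 : ℤ)) k2).erase 0, f i * s = f i' * t → i = i') :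
    IsSplitter k1 k2 q (S.image f) := by
  refine ⟨?_, ?_⟩
  · simp only [mem_image, forall_exists_index, and_imp]
    rintro _ i hi rfl
    exact card_bStar_of_isUnit (hf i hi) hq
  · simp only [coe_image]
    rintro _ ⟨i, hi, rfl⟩ _ ⟨i', hi', rfl⟩ hne
    refine disjoint_left.2 fun z hz hz' => hne ?_
    obtain ⟨s, hs, rfl⟩ := mem_image.1 hz
    obtain ⟨t, ht, hst⟩ := mem_image.1 hz'
    rw [hcancel i hi i' hi' s hs t ht hst.symm]

theorem natAbs_mod_two_eq_of_pow_mul_eq {N g e e' : ℕ} (hN : 2 ∣ N) (hg : Odd g) {s t : ℤ}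
    (h : (g : ZMod N) ^ e * s = (g : ZMod N) ^ e' * t) : s.natAbs % 2 = t.natAbs % 2 := by
  have h2 := congrArg (ZMod.castHom hN (ZMod 2)) h
  simp only [map_mul, map_pow, map_natCast, map_intCast, hg.natCast_zmod_two, one_pow,
    one_mul] at h2
  have := (ZMod.intCast_eq_intCast_iff' s t 2).1 h2
  omega

theorem IsPrimitiveRoot.modEq_of_pow_mul_eq_pow_mul {M : Type*} [CommMonoid M] {ζ u w : M}
    {N e e' i i' : ℕ} (hζ : IsPrimitiveRoot ζ (2 * N)) (hN : N ≠ 0)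
    (hu : u ^ 2 = (ζ ^ i) ^ 2) (hw : w ^ 2 = (ζ ^ i') ^ 2) (h : ζ ^ e * u = ζ ^ e' * w) :
    e + i ≡ e' + i' [MOD N] := by
  have hsq : ζ ^ (2 * (e + i)) = ζ ^ (2 * (e' + i')) :=
    calc ζ ^ (2 * (e + i)) = (ζ ^ e * ζ ^ i) ^ 2 := by rw [← pow_add, ← pow_mul']
      _ = (ζ ^ e * u) ^ 2 := by rw [mul_pow, mul_pow, hu]
      _ = (ζ ^ e' * w) ^ 2 := by rw [h]
      _ = ζ ^ (2 * (e' + i')) := by rw [mul_pow, hw, ← mul_pow, ← pow_add, ← pow_mul']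
  rw [(hζ.isOfFinOrder (by omega)).pow_eq_pow_iff_modEq, ← hζ.eq_orderOf] at hsq
  exact Nat.ModEq.mul_left_cancel' two_ne_zero hsq

section Factorization

variable {k V n p g : ℕ} {ind : ℕ → ℕ} {A : Finset ℕ}

theorem eq_of_add_ind_modEq (hfact : ∀ i ∈ ({0, 1} : Finset ℕ), ∀ z : ZMod V,
      ∃! q : ℕ × ℕ, q.1 ∈ A ∧ 1 ≤ q.2 ∧ q.2 ≤ k ∧ q.2 % 2 = i ∧
        ((q.1 + ind q.2 : ℕ) : ZMod V) = z)
    {a a' x x' : ℕ} (ha : a ∈ A) (ha' : a' ∈ A)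
    (hx : 1 ≤ x ∧ x ≤ k) (hx' : 1 ≤ x' ∧ x' ≤ k) (hpar : x % 2 = x' % 2)
    (h : a + ind x ≡ a' + ind x' [MOD V]) : a = a' ∧ x = x' := by
  obtain ⟨_, _, huniq⟩ := hfact (x % 2) (by simp only [mem_insert, mem_singleton]; omega) (a + ind x : ℕ)
  have hz : ((a' + ind x' : ℕ) : ZMod V) = (a + ind x : ℕ) :=
    ((ZMod.natCast_eq_natCast_iff _ _ _).2 h).symm
  have := (huniq (a, x) ⟨ha, hx.1, hx.2, rfl, rfl⟩).trans
    (huniq (a', x') ⟨ha', hx'.1, hx'.2, hpar.symm, hz⟩).symm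
  simpa [Prod.ext_iff] using this

theorem eq_of_pow_mul_eq_pow_mul (hfact : ∀ i ∈ ({0, 1} : Finset ℕ), ∀ z : ZMod V,
      ∃! q : ℕ × ℕ, q.1 ∈ A ∧ 1 ≤ q.2 ∧ q.2 ≤ k ∧ q.2 % 2 = i ∧
        ((q.1 + ind q.2 : ℕ) : ZMod V) = z)
    (hV : 0 < V) (hn : 0 < n) (hgodd : Odd g)
    (hg : IsPrimitiveRoot (g : ZMod p) (2 * (V * n)))
    (hind : ∀ x, 1 ≤ x → x ≤ k → (g : ZMod p) ^ ind x = x)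
    ⦃q q' : ℕ × ℕ⦄ (hq : q ∈ A ×ˢ range n) (hq' : q' ∈ A ×ˢ range n)
    ⦃s t : ℤ⦄ (hs : s ∈ (Icc (-(k : ℤ)) k).erase 0)
    (ht : t ∈ (Icc (-(k : ℤ)) k).erase 0)
    (h : (g : ZMod (2 * p)) ^ (q.1 + q.2 * V) * s = (g : ZMod (2 * p)) ^ (q'.1 + q'.2 * V) * t) :
    q = q' := by
  obtain ⟨a, j⟩ := q
  obtain ⟨a', j'⟩ := q'
  simp only [mem_product, mem_range, mem_erase, mem_Icc] at hq hq' hs ht h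
  have hsq : ∀ r : ℤ, r ≠ 0 → -(k : ℤ) ≤ r → r ≤ k →
      (r : ZMod p) ^ 2 = ((g : ZMod p) ^ ind r.natAbs) ^ 2 := by
    intro r h0 hl hu
    rw [hind r.natAbs (by omega) (by omega), ← Int.cast_natCast,
      ← Int.cast_pow (r.natAbs : ℤ), Int.natAbs_sq, Int.cast_pow]
  have hmodp : a + j * V + ind s.natAbs ≡ a' + j' * V + ind t.natAbs [MOD V * n] := by
    refine hg.modEq_of_pow_mul_eq_pow_mul (by positivity) (hsq s hs.1 hs.2.1 hs.2.2)
      (hsq t ht.1 ht.2.1 ht.2.2) ?_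
    simpa using congrArg (ZMod.castHom (dvd_mul_left p 2) (ZMod p)) h
  obtain ⟨rfl, hst⟩ : a = a' ∧ s.natAbs = t.natAbs := by
    refine eq_of_add_ind_modEq hfact hq.1 hq'.1 (by omega) (by omega)
      (natAbs_mod_two_eq_of_pow_mul_eq (dvd_mul_right 2 p) hgodd h) ?_
    have := hmodp.of_mul_right n
    rwa [add_right_comm, add_right_comm a', Nat.ModEq, Nat.add_mul_mod_self_right,
      Nat.add_mul_mod_self_right] at this
  rw [hst] at hmodp
  have hjV : j * V ≡ j' * V [MOD n * V] := by
    rw [mul_comm n]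
    exact Nat.ModEq.add_left_cancel' a (Nat.ModEq.add_right_cancel' _ hmodp)
  rw [(Nat.ModEq.mul_right_cancel' hV.ne' hjV).eq_of_lt_of_lt hq.2 hq'.2]

end Factorization

theorem stmt_14_general (k m n p : ℕ) (hk : 0 < k) (hm : 1 ≤ m)
    (hn : 1 ≤ n) (hpe : p = 2 ^ m * k * n + 1)
    (g : ℕ) (hgodd : Odd g) (hg : IsPrimitiveRoot (g : ZMod p) (p - 1))
    (ind : ℕ → ℕ)
    (hind : ∀ x, 1 ≤ x → x ≤ k → ind x ≤ p - 2 ∧ (g : ZMod p) ^ ind x = (x : ZMod p))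
    (A : Finset ℕ) (hAcard : A.card = 2 ^ m)
    (hfact : ∀ i ∈ ({0, 1} : Finset ℕ), ∀ z : ZMod (2 ^ (m - 1) * k),
      ∃! q : ℕ × ℕ, q.1 ∈ A ∧ 1 ≤ q.2 ∧ q.2 ≤ k ∧ q.2 % 2 = i ∧
        ((q.1 + ind q.2 : ℕ) : ZMod (2 ^ (m - 1) * k)) = z) :
    IsSplitter k k (2 * p)
        ((A ×ˢ Finset.range n).image
          (fun q => (g : ZMod (2 * p)) ^ (q.1 + q.2 * (2 ^ (m - 1) * k)))) ∧
      ((A ×ˢ Finset.range n).image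
          (fun q => (g : ZMod (2 * p)) ^ (q.1 + q.2 * (2 ^ (m - 1) * k)))).card
        = 2 ^ m * n := by
  set V := 2 ^ (m - 1) * k with hV
  have hp1 : p - 1 = 2 * (V * n) := by
    rw [hpe, Nat.add_sub_cancel, hV, ← mul_assoc, ← mul_assoc, ← pow_succ',
      Nat.sub_add_cancel hm]
  have hkV : k ≤ V * n :=
    le_mul_of_le_of_one_le (le_mul_of_one_le_left hk.le Nat.one_le_two_pow) hn
  have hgu : IsUnit (g : ZMod (2 * p)) :=
    (ZMod.isUnit_iff_coprime g (2 * p)).2 <| hgodd.coprime_two_right.mul_right <|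
      (ZMod.isUnit_iff_coprime g p).1 (hg.isUnit (by omega))
  rw [hp1] at hg
  have hcancel := eq_of_pow_mul_eq_pow_mul hfact (by positivity) hn hgodd hg
    fun x h1 h2 => (hind x h1 h2).2
  have hone : (1 : ℤ) ∈ (Icc (-(k : ℤ)) k).erase 0 := by
    simp only [mem_erase, mem_Icc]; omega
  refine ⟨isSplitter_image (by omega) (fun _ _ => hgu.pow _) fun q hq q' hq' s hs t ht h =>
    hcancel hq hq' hs ht h, ?_⟩
  rw [card_image_of_injOn fun q hq q' hq' h => hcancel hq hq' hone hone (by simpa using h),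
    card_product, hAcard, card_range]

theorem stmt_14 (k m n p : ℕ) (hk : 0 < k) (hkeven : Even k) (hm : 1 ≤ m)
    (hn : 1 ≤ n) (hp : p.Prime) (hpe : p = 2 ^ m * k * n + 1)
    (g : ℕ) (hgodd : Odd g) (hg : IsPrimitiveRoot (g : ZMod p) (p - 1))
    (ind : ℕ → ℕ)
    (hind : ∀ x, 1 ≤ x → x ≤ k → ind x ≤ p - 2 ∧ (g : ZMod p) ^ ind x = (x : ZMod p))
    (A : Finset ℕ) (hAv : ∀ a ∈ A, a < 2 ^ (m - 1) * k) (hAcard : A.card = 2 ^ m)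
    (hfact : ∀ i ∈ ({0, 1} : Finset ℕ), ∀ z : ZMod (2 ^ (m - 1) * k),
      ∃! q : ℕ × ℕ, q.1 ∈ A ∧ 1 ≤ q.2 ∧ q.2 ≤ k ∧ q.2 % 2 = i ∧
        ((q.1 + ind q.2 : ℕ) : ZMod (2 ^ (m - 1) * k)) = z) :
    IsSplitter k k (2 * p)
        ((A ×ˢ Finset.range n).image
          (fun q => (g : ZMod (2 * p)) ^ (q.1 + q.2 * (2 ^ (m - 1) * k)))) ∧
      ((A ×ˢ Finset.range n).image
          (fun q => (g : ZMod (2 * p)) ^ (q.1 + q.2 * (2 ^ (m - 1) * k)))).card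
        = 2 ^ m * n :=
  stmt_14_general k m n p hk hm hn hpe g hgodd hg ind hind A hAcard hfact
end

section
/- Let p ≡ 1 (mod 8) be a prime such that neither 4 nor -4 lies in the multiplicative subgroup ⟨6,16⟩ of Z_p* generated by 6 and 16. Then -1 ∈ ⟨6,16⟩, and the coset 2·⟨6,16⟩ has order 4 in the quotient group ⟨-1,2,3⟩/⟨6,16⟩, with ⟨2·⟨6,16⟩⟩ = {⟨6,16⟩, 2⟨6,16⟩, 3⟨6,16⟩, 4⟨6,16⟩}. -/
/-!
A submonoid of a finite group with zero is closed under inversion, so `H = ⟨6, 16⟩` is a subgroup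
of the cyclic group `(ZMod p)ˣ`. The quotient by `H` is cyclic, and a cyclic group has at most one
element of order two. The classes of `-1` and `4` square to `1` (as `4 ^ 2 = 16`), and `4 ∉ H`;
so if `-1 ∉ H` they would coincide and `-4 ∈ H`. Hence `-1 ∈ H`, the class of `2` has order four,
and `3 = 2 ^ 3 · 6 / 16` lies in its coset `8H`.
-/

theorem IsCyclic.eq_of_sq_eq_one {α : Type*} [Group α] [Finite α] [IsCyclic α] {x y : α}
    (hx : x ^ 2 = 1) (hy : y ^ 2 = 1) (hx1 : x ≠ 1) (hy1 : y ≠ 1) : x = y := by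
  classical
  have := Fintype.ofFinite α
  by_contra hxy
  have hsub : ({1, x, y} : Finset α) ⊆ Finset.univ.filter (· ^ 2 = 1) := by
    simp [Finset.insert_subset_iff, hx, hy]
  have hcard : ({1, x, y} : Finset α).card = 3 := by
    rw [Finset.card_insert_of_notMem (by simp [hx1.symm, hy1.symm]), Finset.card_pair hxy]
  have := (Finset.card_le_card hsub).trans (IsCyclic.card_pow_eq_one_le two_pos)
  omega

theorem Subgroup.mem_of_sq_mem_of_mul_notMem {G : Type*} [CommGroup G] [Finite G] [IsCyclic G]
    {H : Subgroup G} {a b : G} (ha : a ^ 2 ∈ H) (hb : b ^ 2 ∈ H) (hbH : b ∉ H)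
    (habH : a * b ∉ H) : a ∈ H := by
  have := isCyclic_of_surjective (QuotientGroup.mk' H) (QuotientGroup.mk'_surjective H)
  by_contra haH
  have hab : (a : G ⧸ H) = b := by
    refine IsCyclic.eq_of_sq_eq_one ?_ ?_ ?_ ?_ <;>
      simpa only [← QuotientGroup.mk_pow, QuotientGroup.eq_one_iff, ne_eq]
  apply habH
  rwa [← QuotientGroup.eq_one_iff, QuotientGroup.mk_mul, hab, ← sq, ← QuotientGroup.mk_pow,
    QuotientGroup.eq_one_iff]

namespace Submonoid

variable {G₀ : Type*} [GroupWithZero G₀] [Finite G₀]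

theorem inv_mem_of_finite (S : Submonoid G₀) {x : G₀} (hx : x ∈ S) : x⁻¹ ∈ S := by
  rcases eq_or_ne x 0 with rfl | hx0
  · rwa [inv_zero]
  obtain ⟨n, hn⟩ :=
    mem_powers_iff_mem_zpowers.2 (inv_mem (Subgroup.mem_zpowers (Units.mk0 x hx0)))
  have hxn : x ^ n = x⁻¹ := by simpa using congrArg Units.val hn
  exact hxn ▸ S.pow_mem hx n

theorem mem_units_iff_val_mem_of_finite (S : Submonoid G₀) (u : G₀ˣ) :
    u ∈ S.units ↔ (u : G₀) ∈ S :=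
  ⟨S.val_mem_of_mem_units, fun hu => ⟨hu, by simpa using S.inv_mem_of_finite hu⟩⟩

theorem mem_of_sq_mem_of_mul_notMem {K : Type*} [CommGroupWithZero K] [Finite K] [IsCyclic Kˣ]
    {S : Submonoid K} {a b : K} (ha : a ^ 2 ∈ S) (hb : b ^ 2 ∈ S) (hbS : b ∉ S)
    (habS : a * b ∉ S) : a ∈ S := by
  have hb0 : b ≠ 0 := by rintro rfl; simp_all
  have ha0 : a ≠ 0 := by rintro rfl; simp_all
  refine (S.mem_units_iff_val_mem_of_finite (.mk0 a ha0)).1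
    (Subgroup.mem_of_sq_mem_of_mul_notMem (b := .mk0 b hb0) ?_ ?_ ?_ ?_) <;>
    simpa [S.mem_units_iff_val_mem_of_finite]

end Submonoid

section SixSixteen

variable {K : Type*} [Field K] [Finite K] {S : Submonoid K}

theorem eight_notMem_of_sixteen_mem (h2 : (2 : K) ≠ 0) (h16 : (16 : K) ∈ S) (h4 : (4 : K) ∉ S) :
    (8 : K) ∉ S := by
  intro h8
  have h16ne : (16 : K) ≠ 0 := by simpa [show (16 : K) = 2 ^ 4 by norm_num] using pow_ne_zero 4 h2
  apply h4
  rw [show (4 : K) = 8 * 8 * 16⁻¹ by field_simp; norm_num]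
  exact mul_mem (mul_mem h8 h8) (S.inv_mem_of_finite h16)

theorem closure_neg_one_two_three_le_sup (h2 : (2 : K) ≠ 0) (hneg : (-1 : K) ∈ S)
    (h6 : (6 : K) ∈ S) (h16 : (16 : K) ∈ S) :
    Submonoid.closure ({-1, 2, 3} : Set K) ≤ .closure {2} ⊔ S := by
  have h16ne : (16 : K) ≠ 0 := by simpa [show (16 : K) = 2 ^ 4 by norm_num] using pow_ne_zero 4 h2
  rw [Submonoid.closure_le]
  rintro x (rfl | rfl | rfl)
  · exact Submonoid.mem_sup_right hneg
  · exact Submonoid.mem_sup_left Submonoid.mem_closure_singleton_self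
  · rw [show (3 : K) = 2 ^ 3 * (6 * 16⁻¹) by field_simp; norm_num]
    have h8 : (2 : K) ^ 3 ∈ Submonoid.closure {2} := pow_mem Submonoid.mem_closure_singleton_self 3
    exact mul_mem (Submonoid.mem_sup_left h8)
      (Submonoid.mem_sup_right (mul_mem h6 (S.inv_mem_of_finite h16)))

theorem two_pow_mul_eq_natCast_mul (h6 : (6 : K) ∈ S) (h16 : (16 : K) ∈ S) (h6ne : (6 : K) ≠ 0)
    (n : ℕ) {y : K} (hy : y ∈ S) : ∃ i ∈ ({1, 2, 3, 4} : Finset ℕ), ∃ z ∈ S, 2 ^ n * y = i * z := by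
  have h16y : 16 ^ (n / 4) * y ∈ S := mul_mem (pow_mem h16 _) hy
  have hsplit : (2 : K) ^ n * y = 2 ^ (n % 4) * (16 ^ (n / 4) * y) := by
    rw [← mul_assoc, show (16 : K) = 2 ^ 4 by norm_num, ← pow_mul, ← pow_add, Nat.mod_add_div]
  rw [hsplit]
  have hr : n % 4 < 4 := Nat.mod_lt n (by norm_num)
  interval_cases n % 4
  · exact ⟨1, by simp, _, h16y, by simp⟩
  · exact ⟨2, by simp, _, h16y, by simp⟩
  · exact ⟨4, by simp, _, h16y, by norm_num⟩
  · refine ⟨3, by simp, _, mul_mem (mul_mem h16 (S.inv_mem_of_finite h6)) h16y, ?_⟩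
    field_simp
    ring

end SixSixteen

theorem stmt_18 (p : ℕ) (hp : p.Prime) (hmod : p % 8 = 1)
    (h4 : (4 : ZMod p) ∉ Submonoid.closure ({6, 16} : Set (ZMod p)))
    (h4' : (-4 : ZMod p) ∉ Submonoid.closure ({6, 16} : Set (ZMod p))) :
    (-1 : ZMod p) ∈ Submonoid.closure ({6, 16} : Set (ZMod p)) ∧
      (2 : ZMod p) ∉ Submonoid.closure ({6, 16} : Set (ZMod p)) ∧
      (8 : ZMod p) ∉ Submonoid.closure ({6, 16} : Set (ZMod p)) ∧
      (16 : ZMod p) ∈ Submonoid.closure ({6, 16} : Set (ZMod p)) ∧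
      (∀ x : ZMod p, x ∈ Submonoid.closure ({-1, 2, 3} : Set (ZMod p)) →
        ∃ i ∈ ({1, 2, 3, 4} : Finset ℕ),
          ∃ y ∈ Submonoid.closure ({6, 16} : Set (ZMod p)), x = (i : ZMod p) * y) := by
  have := Fact.mk hp
  have hsmall : ∀ n : ℕ, 0 < n → n < 9 → (n : ZMod p) ≠ 0 := fun n hn hn9 h => by
    have := Nat.le_of_dvd hn ((ZMod.natCast_eq_zero_iff n p).1 h)
    have := hp.two_le
    omega
  have h2 : (2 : ZMod p) ≠ 0 := by simpa using hsmall 2 (by norm_num) (by norm_num)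
  have h6ne : (6 : ZMod p) ≠ 0 := by simpa using hsmall 6 (by norm_num) (by norm_num)
  have h6 : (6 : ZMod p) ∈ Submonoid.closure {6, 16} := Submonoid.subset_closure (by simp)
  have h16 : (16 : ZMod p) ∈ Submonoid.closure {6, 16} := Submonoid.subset_closure (by simp)
  have hneg : (-1 : ZMod p) ∈ Submonoid.closure {6, 16} :=
    Submonoid.mem_of_sq_mem_of_mul_notMem (b := 4) (by simp)
      (by norm_num [h16]) h4 (by simpa using h4')
  refine ⟨hneg, fun h => h4 ?_, eight_notMem_of_sixteen_mem h2 h16 h4, h16, fun x hx => ?_⟩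
  · simpa [show (2 : ZMod p) * 2 = 4 by norm_num] using Submonoid.mul_mem _ h h
  obtain ⟨_, hpow, y, hy, rfl⟩ :=
    Submonoid.mem_sup.1 (closure_neg_one_two_three_le_sup h2 hneg h6 h16 hx)
  obtain ⟨n, rfl⟩ := Submonoid.mem_closure_singleton.1 hpow
  exact two_pow_mul_eq_natCast_mul h6 h16 h6ne n hy
end
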